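/- arXiv:0709.1395 — 6 statements merged into one kernel-verified Lean document; each statement's English description precedes it below -/
import Mathlib

section
/- Suppose Φ : Σ → ℝ has summable variations and ρ : Σ → (0,∞) satisfies ℒ_Φ ρ = ρ pointwise, i.e. for every x ∈ Σ the series Σ_{i∈ℕ} e^{Φ(ix)} ρ(ix) converges and equals ρ(x). Suppose further that V_1(log ρ) ≤ log B_1, i.e. |log ρ(x) − log ρ(y)| ≤ log B_1 whenever x and y lie in the same 1-cylinder. Then ρ(x)/ρ(y) ≤ B_0 B_1 for all x, y ∈ Σ; in particular V_0(log ρ) := sup_{x,y∈Σ} |log ρ(x) − log ρ(y)| ≤ 2 log B_0. -/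
open Filter Topology MeasureTheory
open scoped ENNReal

noncomputable section

/-- The left shift on `Σ = ℕ^ℕ`. -/
def shiftMap (x : ℕ → ℕ) : ℕ → ℕ := fun i => x (i + 1)

/-- Prepending the symbol `i` to the sequence `x` (`ix` in the paper's notation). -/
def consSeq (i : ℕ) (x : ℕ → ℕ) : ℕ → ℕ := fun n => Nat.casesOn n i x

/-- `x` and `y` lie in the same `k`-cylinder. -/
def SameCyl (k : ℕ) (x y : ℕ → ℕ) : Prop := ∀ i < k, x i = y i

/-- The `k`-cylinder determined by (the first `k` symbols of) `w`. -/
def cylSet (k : ℕ) (w : ℕ → ℕ) : Set (ℕ → ℕ) := {x | ∀ i < k, x i = w i}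

/-- The `k`-th variation `V_k(Φ)`, valued in `ℝ≥0∞`. -/
def varK (Φ : (ℕ → ℕ) → ℝ) (k : ℕ) : ℝ≥0∞ :=
  ⨆ (x : ℕ → ℕ) (y : ℕ → ℕ) (_ : SameCyl k x y), ENNReal.ofReal |Φ x - Φ y|

/-- `Σ_{j ≥ k} V_j(Φ)`. -/
def varSumFrom (Φ : (ℕ → ℕ) → ℝ) (k : ℕ) : ℝ≥0∞ := ∑' j : ℕ, varK Φ (j + k)

/-- `Φ` has summable variations: `Σ_{k ≥ 1} V_k(Φ) < ∞`. -/
def SummableVar (Φ : (ℕ → ℕ) → ℝ) : Prop := varSumFrom Φ 1 ≠ ⊤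

/-- The distortion constant `B_k = exp(Σ_{j ≥ k+1} V_j(Φ))`. -/
def Bk (Φ : (ℕ → ℕ) → ℝ) (k : ℕ) : ℝ := Real.exp (varSumFrom Φ (k + 1)).toReal

/-- The Birkhoff sum `Φ_k = Σ_{j=0}^{k−1} Φ ∘ σ^j`. -/
def birkhoff (Φ : (ℕ → ℕ) → ℝ) (k : ℕ) (x : ℕ → ℕ) : ℝ :=
  ∑ j ∈ Finset.range k, Φ (shiftMap^[j] x)

end

/-- If `Φ` has summable variations and `ρ > 0` is a pointwise fixed point
of the transfer operator `ℒ_Φ` with `V_1(log ρ) ≤ log B_1`, then `ρ(x)/ρ(y) ≤ B_0 B_1` for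
all `x, y`; in particular `V_0(log ρ) ≤ 2 log B_0`. -/
theorem density_ratio_bound
    (Φ ρ : (ℕ → ℕ) → ℝ)
    (hΦ : SummableVar Φ) (hρpos : ∀ x, 0 < ρ x)
    (hfix : ∀ x, HasSum (fun i : ℕ => Real.exp (Φ (consSeq i x)) * ρ (consSeq i x)) (ρ x))
    (hV1 : varK (fun x => Real.log (ρ x)) 1 ≤ ENNReal.ofReal (Real.log (Bk Φ 1))) :
    (∀ x y, ρ x / ρ y ≤ Bk Φ 0 * Bk Φ 1) ∧
      ∀ x y, |Real.log (ρ x) - Real.log (ρ y)| ≤ 2 * Real.log (Bk Φ 0) := by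

  classical
  -- abbreviations
  set L0 : ℝ := (varSumFrom Φ 1).toReal with hL0def
  set L1 : ℝ := (varSumFrom Φ 2).toReal with hL1def
  have hB0 : Bk Φ 0 = Real.exp L0 := by simp [Bk, hL0def]
  have hB1 : Bk Φ 1 = Real.exp L1 := by simp [Bk, hL1def]
  have hlogB0 : Real.log (Bk Φ 0) = L0 := by rw [hB0, Real.log_exp]
  have hlogB1 : Real.log (Bk Φ 1) = L1 := by rw [hB1, Real.log_exp]
  have hL1nonneg : 0 ≤ L1 := ENNReal.toReal_nonneg
  -- same cylinder for cons
  have hsame : ∀ (i : ℕ) (x y : ℕ → ℕ), SameCyl 1 (consSeq i x) (consSeq i y) := by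
    intro i x y j hj
    interval_cases j
    rfl
  -- Step A : variation bound on Φ
  have hstepA : ∀ x y : ℕ → ℕ, SameCyl 1 x y → |Φ x - Φ y| ≤ L0 := by
    intro x y hxy
    have h1 : ENNReal.ofReal |Φ x - Φ y| ≤ varK Φ 1 := by
      refine le_iSup_of_le x (le_iSup_of_le y ?_)
      exact le_iSup_of_le hxy le_rfl
    have h2 : varK Φ 1 ≤ varSumFrom Φ 1 := by
      have := ENNReal.le_tsum (f := fun j : ℕ => varK Φ (j + 1)) 0
      simpa [varSumFrom] using this
    have h3 : ENNReal.ofReal |Φ x - Φ y| ≤ varSumFrom Φ 1 := h1.trans h2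
    exact (ENNReal.ofReal_le_iff_le_toReal hΦ).mp h3
  -- Step B : variation bound on log ρ
  have hstepB : ∀ x y : ℕ → ℕ, SameCyl 1 x y →
      |Real.log (ρ x) - Real.log (ρ y)| ≤ L1 := by
    intro x y hxy
    have h1 : ENNReal.ofReal |Real.log (ρ x) - Real.log (ρ y)|
        ≤ varK (fun x => Real.log (ρ x)) 1 := by
      refine le_iSup_of_le x (le_iSup_of_le y ?_)
      exact le_iSup_of_le hxy le_rfl
    have h3 := h1.trans hV1
    rw [hlogB1] at h3
    exact (ENNReal.ofReal_le_ofReal_iff hL1nonneg).mp h3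
  have hB0pos : 0 < Bk Φ 0 := by rw [hB0]; exact Real.exp_pos _
  have hB1pos : 0 < Bk Φ 1 := by rw [hB1]; exact Real.exp_pos _
  -- Step C : main inequality ρ x ≤ B0 B1 ρ y
  have hmain : ∀ x y : ℕ → ℕ, ρ x ≤ Bk Φ 0 * Bk Φ 1 * ρ y := by
    intro x y
    have hterm : ∀ i : ℕ,
        Real.exp (Φ (consSeq i x)) * ρ (consSeq i x)
          ≤ Bk Φ 0 * Bk Φ 1 * (Real.exp (Φ (consSeq i y)) * ρ (consSeq i y)) := by
      intro i
      have hA := hstepA _ _ (hsame i x y)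
      have hB := hstepB _ _ (hsame i x y)
      have hexp : Real.exp (Φ (consSeq i x)) ≤ Bk Φ 0 * Real.exp (Φ (consSeq i y)) := by
        have : Φ (consSeq i x) ≤ Φ (consSeq i y) + L0 := by
          have := (abs_le.mp hA).2; linarith
        calc Real.exp (Φ (consSeq i x)) ≤ Real.exp (Φ (consSeq i y) + L0) :=
              Real.exp_le_exp.mpr this
          _ = Bk Φ 0 * Real.exp (Φ (consSeq i y)) := by
              rw [Real.exp_add, hB0]; ring
      have hrho : ρ (consSeq i x) ≤ Bk Φ 1 * ρ (consSeq i y) := by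
        have h1 : Real.log (ρ (consSeq i x)) ≤ Real.log (ρ (consSeq i y)) + L1 := by
          have := (abs_le.mp hB).2; linarith
        have := Real.exp_le_exp.mpr h1
        rw [Real.exp_log (hρpos _), Real.exp_add, Real.exp_log (hρpos _)] at this
        rw [hB1, mul_comm]
        exact this
      calc Real.exp (Φ (consSeq i x)) * ρ (consSeq i x)
          ≤ (Bk Φ 0 * Real.exp (Φ (consSeq i y))) * (Bk Φ 1 * ρ (consSeq i y)) := by
            apply mul_le_mul hexp hrho (le_of_lt (hρpos _))
            exact mul_nonneg hB0pos.le (Real.exp_pos _).le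
        _ = Bk Φ 0 * Bk Φ 1 * (Real.exp (Φ (consSeq i y)) * ρ (consSeq i y)) := by ring
    exact hasSum_le hterm (hfix x) ((hfix y).mul_left _)
  have hratio : ∀ x y, ρ x / ρ y ≤ Bk Φ 0 * Bk Φ 1 := by
    intro x y
    rw [div_le_iff₀ (hρpos y)]
    exact hmain x y
  refine ⟨hratio, ?_⟩
  -- L1 ≤ L0
  have hle : varSumFrom Φ 2 ≤ varSumFrom Φ 1 := by
    have := ENNReal.tsum_comp_le_tsum_of_injective
      (f := fun j : ℕ => j + 1) (fun a b h => by simpa using h)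
      (fun j : ℕ => varK Φ (j + 1))
    simpa [varSumFrom, add_assoc] using this
  have hL1L0 : L1 ≤ L0 := ENNReal.toReal_mono hΦ hle
  have hlogle : ∀ x y : ℕ → ℕ, Real.log (ρ x) - Real.log (ρ y) ≤ 2 * L0 := by
    intro x y
    have h1 : Real.log (ρ x) - Real.log (ρ y) = Real.log (ρ x / ρ y) := by
      rw [Real.log_div (ne_of_gt (hρpos x)) (ne_of_gt (hρpos y))]
    have h2 : Real.log (ρ x / ρ y) ≤ Real.log (Bk Φ 0 * Bk Φ 1) :=
      Real.log_le_log (div_pos (hρpos x) (hρpos y)) (hratio x y)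
    have h3 : Real.log (Bk Φ 0 * Bk Φ 1) = L0 + L1 := by
      rw [Real.log_mul (ne_of_gt hB0pos) (ne_of_gt hB1pos), hlogB0, hlogB1]
    rw [h1]
    calc Real.log (ρ x / ρ y) ≤ L0 + L1 := by rw [← h3]; exact h2
      _ ≤ 2 * L0 := by linarith
  intro x y
  rw [hlogB0]
  exact abs_sub_le_iff.mpr ⟨hlogle x y, hlogle y x⟩
end

section
/- Suppose Φ : Σ → ℝ has summable variations and ρ : Σ → (0,∞) is Borel measurable, satisfies ℒ_Φ ρ = ρ pointwise (for every x ∈ Σ the series Σ_{i∈ℕ} e^{Φ(ix)} ρ(ix) converges and equals ρ(x)), and satisfies V_1(log ρ) ≤ log B_1 (|log ρ(x) − log ρ(y)| ≤ log B_1 whenever x and y lie in the same 1-cylinder). If moreover m is a Borel probability measure on Σ with ∫ ρ dm = 1, then B_0^{−2} ≤ ρ(x) ≤ B_0^{2} for every x ∈ Σ; in particular the constant H := B_0^4 satisfies H ≥ (sup_{x∈Σ} ρ(x))². -/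
open Filter Topology MeasureTheory
open scoped ENNReal

theorem ratio_bound (Φ ρ : (ℕ → ℕ) → ℝ)
    (hΦ : SummableVar Φ) (hρpos : ∀ x, 0 < ρ x)
    (hfix : ∀ x, HasSum (fun i : ℕ => Real.exp (Φ (consSeq i x)) * ρ (consSeq i x)) (ρ x))
    (hV1 : varK (fun x => Real.log (ρ x)) 1 ≤ ENNReal.ofReal (Real.log (Bk Φ 1)))
    (x y : ℕ → ℕ) : ρ x ≤ Bk Φ 0 * ρ y := by
  have hsplit : varSumFrom Φ 1 = varK Φ 1 + varSumFrom Φ 2 := by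
    have h := tsum_eq_zero_add' (f := fun j : ℕ => varK Φ (j + 1)) ENNReal.summable
    rw [varSumFrom, varSumFrom, h]
  have hV1ne : varK Φ 1 ≠ ⊤ := by
    intro h
    exact hΦ (by rw [hsplit, h, top_add])
  have hS2ne : varSumFrom Φ 2 ≠ ⊤ := by
    intro h
    exact hΦ (by rw [hsplit, h, add_top])
  have htoReal : (varSumFrom Φ 1).toReal = (varK Φ 1).toReal + (varSumFrom Φ 2).toReal := by
    rw [hsplit, ENNReal.toReal_add hV1ne hS2ne]
  have hlogB1 : Real.log (Bk Φ 1) = (varSumFrom Φ 2).toReal := by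
    simp [Bk, Real.log_exp]
  have hB0 : Bk Φ 0 = Real.exp ((varK Φ 1).toReal) * Real.exp ((varSumFrom Φ 2).toReal) := by
    rw [Bk, htoReal, Real.exp_add]
  -- same cylinder
  have hsame : ∀ i : ℕ, SameCyl 1 (consSeq i x) (consSeq i y) := by
    intro i j hj
    interval_cases j
    rfl
  -- ρ bound on cylinders
  have hρbound : ∀ i : ℕ, ρ (consSeq i x) ≤ Real.exp ((varSumFrom Φ 2).toReal) * ρ (consSeq i y) := by
    intro i
    have h1 : ENNReal.ofReal |Real.log (ρ (consSeq i x)) - Real.log (ρ (consSeq i y))| ≤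
        ENNReal.ofReal (Real.log (Bk Φ 1)) := by
      refine le_trans ?_ hV1
      exact le_iSup_of_le (consSeq i x) (le_iSup_of_le (consSeq i y)
        (le_iSup_of_le (hsame i) le_rfl))
    have h2 : |Real.log (ρ (consSeq i x)) - Real.log (ρ (consSeq i y))| ≤ Real.log (Bk Φ 1) := by
      have hnn : (0:ℝ) ≤ Real.log (Bk Φ 1) := by
        rw [hlogB1]; exact ENNReal.toReal_nonneg
      exact (ENNReal.ofReal_le_ofReal_iff hnn).mp h1
    have h3 : Real.log (ρ (consSeq i x)) ≤ Real.log (ρ (consSeq i y)) + (varSumFrom Φ 2).toReal := by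
      have := abs_le.mp h2
      linarith [this.2, hlogB1 ▸ this.2]
    calc ρ (consSeq i x) = Real.exp (Real.log (ρ (consSeq i x))) :=
          (Real.exp_log (hρpos _)).symm
      _ ≤ Real.exp (Real.log (ρ (consSeq i y)) + (varSumFrom Φ 2).toReal) := Real.exp_le_exp.mpr h3
      _ = Real.exp ((varSumFrom Φ 2).toReal) * ρ (consSeq i y) := by
          rw [Real.exp_add, Real.exp_log (hρpos _), mul_comm]
  -- Φ bound
  have hΦbound : ∀ i : ℕ, Real.exp (Φ (consSeq i x)) ≤
      Real.exp ((varK Φ 1).toReal) * Real.exp (Φ (consSeq i y)) := by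
    intro i
    have h1 : ENNReal.ofReal |Φ (consSeq i x) - Φ (consSeq i y)| ≤ varK Φ 1 :=
      le_iSup_of_le (consSeq i x) (le_iSup_of_le (consSeq i y)
        (le_iSup_of_le (hsame i) le_rfl))
    have h2 : |Φ (consSeq i x) - Φ (consSeq i y)| ≤ (varK Φ 1).toReal :=
      (ENNReal.ofReal_le_iff_le_toReal hV1ne).mp h1
    have h3 : Φ (consSeq i x) ≤ (varK Φ 1).toReal + Φ (consSeq i y) := by
      have := (abs_le.mp h2).2; linarith
    calc Real.exp (Φ (consSeq i x)) ≤ Real.exp ((varK Φ 1).toReal + Φ (consSeq i y)) :=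
          Real.exp_le_exp.mpr h3
      _ = Real.exp ((varK Φ 1).toReal) * Real.exp (Φ (consSeq i y)) := Real.exp_add _ _
  -- combine termwise
  have hterm : ∀ i : ℕ, Real.exp (Φ (consSeq i x)) * ρ (consSeq i x) ≤
      Bk Φ 0 * (Real.exp (Φ (consSeq i y)) * ρ (consSeq i y)) := by
    intro i
    have := mul_le_mul (hΦbound i) (hρbound i) (le_of_lt (hρpos _))
      (by positivity)
    calc Real.exp (Φ (consSeq i x)) * ρ (consSeq i x)
        ≤ (Real.exp ((varK Φ 1).toReal) * Real.exp (Φ (consSeq i y))) *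
          (Real.exp ((varSumFrom Φ 2).toReal) * ρ (consSeq i y)) := this
      _ = Bk Φ 0 * (Real.exp (Φ (consSeq i y)) * ρ (consSeq i y)) := by
          rw [hB0]; ring
  exact hasSum_le hterm (hfix x) ((hfix y).mul_left (Bk Φ 0))

/-- Under the hypotheses of Statement 6, if moreover `ρ` is measurable and
`m` is a Borel probability measure with `∫ ρ dm = 1`, then `B_0^{−2} ≤ ρ ≤ B_0^{2}`
everywhere; in particular `H := B_0^4` satisfies `H ≥ (sup ρ)²`. -/
theorem density_bounds
    (Φ ρ : (ℕ → ℕ) → ℝ)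
    (hΦ : SummableVar Φ) (hρpos : ∀ x, 0 < ρ x) (hρmeas : Measurable ρ)
    (hfix : ∀ x, HasSum (fun i : ℕ => Real.exp (Φ (consSeq i x)) * ρ (consSeq i x)) (ρ x))
    (hV1 : varK (fun x => Real.log (ρ x)) 1 ≤ ENNReal.ofReal (Real.log (Bk Φ 1)))
    (m : Measure (ℕ → ℕ)) [IsProbabilityMeasure m] (hint : ∫ x, ρ x ∂m = 1) :
    (∀ x, (Bk Φ 0 ^ 2)⁻¹ ≤ ρ x ∧ ρ x ≤ Bk Φ 0 ^ 2) ∧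
      (⨆ x, ρ x) ^ 2 ≤ Bk Φ 0 ^ 4 := by
  have hkey : ∀ x y, ρ x ≤ Bk Φ 0 * ρ y := ratio_bound Φ ρ hΦ hρpos hfix hV1
  have hB1 : (1:ℝ) ≤ Bk Φ 0 := Real.one_le_exp ENNReal.toReal_nonneg
  have hB0 : (0:ℝ) < Bk Φ 0 := lt_of_lt_of_le one_pos hB1
  set x0 : ℕ → ℕ := fun _ => 0 with hx0
  have hintgr : Integrable ρ m := by
    refine Integrable.mono' (integrable_const (Bk Φ 0 * ρ x0)) hρmeas.aestronglyMeasurable ?_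
    filter_upwards with y
    rw [Real.norm_eq_abs, abs_of_pos (hρpos y)]
    exact hkey y x0
  have hub : ∀ x, ρ x ≤ Bk Φ 0 := by
    intro x
    have h1 : ∀ y, ρ x / Bk Φ 0 ≤ ρ y := by
      intro y
      rw [div_le_iff₀ hB0]
      exact (hkey x y).trans_eq (mul_comm _ _)
    have h2 := integral_mono (integrable_const (ρ x / Bk Φ 0)) hintgr h1
    rw [hint, integral_const] at h2
    simp only [measure_univ, probReal_univ, ENNReal.toReal_one, one_smul] at h2
    rw [div_le_one hB0] at h2
    exact h2
  have hlb : ∀ x, (Bk Φ 0)⁻¹ ≤ ρ x := by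
    intro x
    have h2 := integral_mono hintgr (integrable_const (Bk Φ 0 * ρ x)) (fun y => hkey y x)
    rw [hint, integral_const] at h2
    simp only [measure_univ, probReal_univ, ENNReal.toReal_one, one_smul] at h2
    rw [inv_le_iff_one_le_mul₀ hB0]
    linarith [h2]
  have hBsq : Bk Φ 0 ≤ Bk Φ 0 ^ 2 := by nlinarith
  refine ⟨fun x => ⟨?_, (hub x).trans hBsq⟩, ?_⟩
  · calc (Bk Φ 0 ^ 2)⁻¹ ≤ (Bk Φ 0)⁻¹ := by
          apply inv_anti₀ hB0 hBsq
      _ ≤ ρ x := hlb x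
  · have hbdd : BddAbove (Set.range ρ) := ⟨Bk Φ 0, by rintro _ ⟨x, rfl⟩; exact hub x⟩
    have hsup : (⨆ x, ρ x) ≤ Bk Φ 0 := ciSup_le hub
    have hsupnn : 0 ≤ ⨆ x, ρ x := le_trans (le_of_lt (hρpos x0)) (le_ciSup hbdd x0)
    calc (⨆ x, ρ x) ^ 2 ≤ Bk Φ 0 ^ 2 := pow_le_pow_left₀ hsupnn hsup 2
      _ ≤ Bk Φ 0 ^ 4 := by nlinarith
end

section
/- Suppose Φ : Σ → ℝ is Borel measurable with summable variations, and m is a Φ-conformal Borel probability measure on Σ, i.e. m(σ(A)) = ∫_A e^{−Φ} dm for every Borel set A contained in a single 1-cylinder. Then m satisfies the Gibbs property with constant B_0: for every k ≥ 1, every k-cylinder C and every x ∈ C, B_0^{−1} e^{Φ_k(x)} ≤ m(C) ≤ B_0 e^{Φ_k(x)}, where Φ_k := Σ_{j=0}^{k−1} Φ∘σ^j. -/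
open Filter Topology MeasureTheory
open scoped ENNReal

/-- `m` is `Φ`-conformal: `m(σ(A)) = ∫_A e^{−Φ} dm` for every Borel `A` contained in a
single 1-cylinder. -/
def ConformalMeasure (Φ : (ℕ → ℕ) → ℝ) (m : MeasureTheory.Measure (ℕ → ℕ)) : Prop :=
  ∀ A : Set (ℕ → ℕ), MeasurableSet A → (∃ i : ℕ, A ⊆ cylSet 1 fun _ => i) →
    m (shiftMap '' A) = ∫⁻ x in A, ENNReal.ofReal (Real.exp (-Φ x)) ∂m

-- auxiliary lemmas

lemma measurable_shiftMap : Measurable shiftMap := by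
  apply measurable_pi_lambda
  intro i; exact measurable_pi_apply (i + 1)

lemma measurable_consSeq (i : ℕ) : Measurable (consSeq i) := by
  apply measurable_pi_lambda
  intro n
  cases n with
  | zero => exact measurable_const
  | succ k => exact measurable_pi_apply k

lemma shiftMap_iterate (k : ℕ) (x : ℕ → ℕ) (n : ℕ) : shiftMap^[k] x n = x (n + k) := by
  induction k generalizing x with
  | zero => rfl
  | succ k ih =>
    rw [Function.iterate_succ_apply, ih (shiftMap x)]
    rfl

lemma measurableSet_cylSet (k : ℕ) (w : ℕ → ℕ) : MeasurableSet (cylSet k w) := by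
  have : cylSet k w = ⋂ i ∈ Set.Iio k, (fun x : ℕ → ℕ => x i) ⁻¹' {w i} := by
    ext x; simp [cylSet]
  rw [this]
  exact MeasurableSet.biInter ((Set.finite_Iio k).countable)
    (fun i _ => (measurable_pi_apply i) (measurableSet_singleton (w i)))

lemma image_shift_eq {A : Set (ℕ → ℕ)} {i : ℕ} (hA : A ⊆ cylSet 1 fun _ => i) :
    shiftMap '' A = consSeq i ⁻¹' A := by
  ext y
  constructor
  · rintro ⟨x, hx, rfl⟩
    have hx0 : x 0 = i := hA hx 0 (by norm_num)
    have : consSeq i (shiftMap x) = x := by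
      funext n; cases n with
      | zero => exact hx0.symm
      | succ k => rfl
    simpa [Set.mem_preimage, this]
  · intro hy
    refine ⟨consSeq i y, hy, ?_⟩
    funext n; rfl

lemma birkhoff_succ (Φ : (ℕ → ℕ) → ℝ) (k : ℕ) (x : ℕ → ℕ) :
    birkhoff Φ (k + 1) x = Φ x + birkhoff Φ k (shiftMap x) := by
  unfold birkhoff
  rw [Finset.sum_range_succ']
  simp [Function.iterate_succ_apply, add_comm]

section Conf
variable {Φ : (ℕ → ℕ) → ℝ} {m : MeasureTheory.Measure (ℕ → ℕ)}

lemma change_of_var (hΦmeas : Measurable Φ) (hconf : ConformalMeasure Φ m)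
    {A : Set (ℕ → ℕ)} (hA : MeasurableSet A) {i : ℕ} (hAi : A ⊆ cylSet 1 fun _ => i)
    {g : (ℕ → ℕ) → ℝ≥0∞} (hg : Measurable g) :
    ∫⁻ y in shiftMap '' A, g y ∂m
      = ∫⁻ x in A, g (shiftMap x) * ENNReal.ofReal (Real.exp (-Φ x)) ∂m := by
  have himg : MeasurableSet (shiftMap '' A) := by
    rw [image_shift_eq hAi]; exact (measurable_consSeq i) hA
  have hfmeas : Measurable (fun x => ENNReal.ofReal (Real.exp (-Φ x))) := by
    apply ENNReal.measurable_ofReal.comp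
    exact (Real.measurable_exp.comp hΦmeas.neg)
  have hmeq : m.restrict (shiftMap '' A)
      = ((m.restrict A).withDensity (fun x => ENNReal.ofReal (Real.exp (-Φ x)))).map
          shiftMap := by
    ext S hS
    rw [Measure.map_apply measurable_shiftMap hS,
      withDensity_apply _ (measurable_shiftMap hS),
      Measure.restrict_restrict (measurable_shiftMap hS),
      Measure.restrict_apply hS, Set.inter_comm S, Set.inter_comm (shiftMap ⁻¹' S) A,
      ← Set.image_inter_preimage]
    exact hconf (A ∩ shiftMap ⁻¹' S) (hA.inter (measurable_shiftMap hS))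
      ⟨i, fun x hx => hAi hx.1⟩
  calc ∫⁻ y in shiftMap '' A, g y ∂m
      = ∫⁻ y, g y ∂(((m.restrict A).withDensity
          (fun x => ENNReal.ofReal (Real.exp (-Φ x)))).map shiftMap) := by rw [← hmeq]
    _ = ∫⁻ x, g (shiftMap x) ∂((m.restrict A).withDensity
          (fun x => ENNReal.ofReal (Real.exp (-Φ x)))) :=
        lintegral_map hg measurable_shiftMap
    _ = ∫⁻ x, ENNReal.ofReal (Real.exp (-Φ x)) * g (shiftMap x) ∂(m.restrict A) :=
        lintegral_withDensity_eq_lintegral_mul _ hfmeas (hg.comp measurable_shiftMap)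
    _ = ∫⁻ x in A, g (shiftMap x) * ENNReal.ofReal (Real.exp (-Φ x)) ∂m := by
        congr 1; funext x; rw [mul_comm]

lemma iterated_conf (hΦmeas : Measurable Φ) (hconf : ConformalMeasure Φ m) :
    ∀ (k : ℕ) (w : ℕ → ℕ) (A : Set (ℕ → ℕ)), MeasurableSet A → A ⊆ cylSet k w →
      m (shiftMap^[k] '' A) = ∫⁻ x in A, ENNReal.ofReal (Real.exp (-(birkhoff Φ k x))) ∂m := by
  intro k
  induction k with
  | zero =>
    intro w A hA _
    simp [birkhoff, Measure.restrict_apply MeasurableSet.univ,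
      setLIntegral_const, hA]
  | succ k ih =>
    intro w A hA hAw
    have hA1 : A ⊆ cylSet 1 fun _ => w 0 := by
      intro x hx i hi
      interval_cases i
      exact hAw hx 0 (Nat.succ_pos k)
    have hA'eq : shiftMap '' A = consSeq (w 0) ⁻¹' A := image_shift_eq hA1
    have hA'meas : MeasurableSet (shiftMap '' A) := by
      rw [hA'eq]; exact (measurable_consSeq (w 0)) hA
    have hA'sub : shiftMap '' A ⊆ cylSet k (fun n => w (n + 1)) := by
      rintro y ⟨x, hx, rfl⟩ i hi
      exact hAw hx (i + 1) (Nat.succ_lt_succ hi)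
    have himg : shiftMap^[k + 1] '' A = shiftMap^[k] '' (shiftMap '' A) := by
      rw [Function.iterate_succ, Set.image_comp]
    rw [himg, ih (fun n => w (n + 1)) (shiftMap '' A) hA'meas hA'sub]
    have hmeasb : Measurable fun x => ENNReal.ofReal (Real.exp (-(birkhoff Φ k x))) := by
      apply ENNReal.measurable_ofReal.comp
      apply Real.measurable_exp.comp
      apply Measurable.neg
      apply Finset.measurable_sum
      intro j _
      exact hΦmeas.comp (measurable_shiftMap.iterate j)
    rw [change_of_var hΦmeas hconf hA hA1 hmeasb]
    congr 1
    funext x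
    rw [← ENNReal.ofReal_mul (Real.exp_nonneg _), ← Real.exp_add, birkhoff_succ]
    ring_nf

end Conf

lemma iterate_image_cylSet (k : ℕ) (w : ℕ → ℕ) :
    shiftMap^[k] '' cylSet k w = Set.univ := by
  ext y
  simp only [Set.mem_univ, iff_true]
  refine ⟨fun n => if n < k then w n else y (n - k), fun i hi => by simp [hi], ?_⟩
  funext n
  rw [shiftMap_iterate]
  simp

lemma distortion {Φ : (ℕ → ℕ) → ℝ} (hΦ : SummableVar Φ) (k : ℕ) (w x y : ℕ → ℕ)
    (hx : x ∈ cylSet k w) (hy : y ∈ cylSet k w) :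
    |birkhoff Φ k x - birkhoff Φ k y| ≤ (varSumFrom Φ 1).toReal := by
  have hstep : ∀ j < k, ENNReal.ofReal |Φ (shiftMap^[j] x) - Φ (shiftMap^[j] y)|
      ≤ varK Φ (k - j) := by
    intro j hj
    have hsame : SameCyl (k - j) (shiftMap^[j] x) (shiftMap^[j] y) := by
      intro i hi
      rw [shiftMap_iterate, shiftMap_iterate, hx (i + j) (by omega), hy (i + j) (by omega)]
    exact le_iSup_of_le (shiftMap^[j] x) (le_iSup_of_le (shiftMap^[j] y)
      (le_iSup_of_le hsame le_rfl))
  have h1 : ENNReal.ofReal |birkhoff Φ k x - birkhoff Φ k y| ≤ varSumFrom Φ 1 := by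
    have habs : |birkhoff Φ k x - birkhoff Φ k y|
        ≤ ∑ j ∈ Finset.range k, |Φ (shiftMap^[j] x) - Φ (shiftMap^[j] y)| := by
      rw [birkhoff, birkhoff, ← Finset.sum_sub_distrib]
      exact Finset.abs_sum_le_sum_abs _ _
    calc ENNReal.ofReal |birkhoff Φ k x - birkhoff Φ k y|
        ≤ ENNReal.ofReal (∑ j ∈ Finset.range k,
            |Φ (shiftMap^[j] x) - Φ (shiftMap^[j] y)|) := ENNReal.ofReal_le_ofReal habs
      _ ≤ ∑ j ∈ Finset.range k,
            ENNReal.ofReal |Φ (shiftMap^[j] x) - Φ (shiftMap^[j] y)| :=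
          le_of_eq (ENNReal.ofReal_sum_of_nonneg (fun j _ => abs_nonneg _))
      _ ≤ ∑ j ∈ Finset.range k, varK Φ (k - j) := by
          apply Finset.sum_le_sum
          intro j hj
          exact hstep j (Finset.mem_range.mp hj)
      _ = ∑ j ∈ Finset.range k, varK Φ (j + 1) := by
          rw [← Finset.sum_range_reflect]
          apply Finset.sum_congr rfl
          intro j hj
          have : j < k := Finset.mem_range.mp hj
          congr 1
          omega
      _ ≤ ∑' j : ℕ, varK Φ (j + 1) := ENNReal.sum_le_tsum _
      _ = varSumFrom Φ 1 := rfl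
  exact (ENNReal.ofReal_le_iff_le_toReal hΦ).mp h1


/-- A `Φ`-conformal probability measure for a potential with summable
variations satisfies the Gibbs property with constant `B_0`. -/
theorem conformal_gibbs
    (Φ : (ℕ → ℕ) → ℝ) (hΦmeas : Measurable Φ) (hΦ : SummableVar Φ)
    (m : MeasureTheory.Measure (ℕ → ℕ)) [MeasureTheory.IsProbabilityMeasure m]
    (hconf : ConformalMeasure Φ m) :
    ∀ k : ℕ, 1 ≤ k → ∀ w x, x ∈ cylSet k w →
      ENNReal.ofReal (Real.exp (birkhoff Φ k x) / Bk Φ 0) ≤ m (cylSet k w) ∧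
        m (cylSet k w) ≤ ENNReal.ofReal (Bk Φ 0 * Real.exp (birkhoff Φ k x)) := by
  intro k hk w x hx
  set S := (varSumFrom Φ 1).toReal with hS
  have hS0 : 0 ≤ S := ENNReal.toReal_nonneg
  set c := birkhoff Φ k x with hc
  have hB : Bk Φ 0 = Real.exp S := rfl
  have hC := measurableSet_cylSet k w
  have hint : ∫⁻ y in cylSet k w, ENNReal.ofReal (Real.exp (-(birkhoff Φ k y))) ∂m = 1 := by
    rw [← iterated_conf hΦmeas hconf k w (cylSet k w) hC (fun z hz => hz),
      iterate_image_cylSet, measure_univ]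
  have hub : ∀ y ∈ cylSet k w,
      ENNReal.ofReal (Real.exp (-(birkhoff Φ k y))) ≤ ENNReal.ofReal (Real.exp (S - c)) := by
    intro y hy
    apply ENNReal.ofReal_le_ofReal
    apply Real.exp_le_exp.mpr
    have h := distortion hΦ k w x y hx hy
    have := (abs_le.mp h).2
    linarith
  have hlb : ∀ y ∈ cylSet k w,
      ENNReal.ofReal (Real.exp (-S - c)) ≤ ENNReal.ofReal (Real.exp (-(birkhoff Φ k y))) := by
    intro y hy
    apply ENNReal.ofReal_le_ofReal
    apply Real.exp_le_exp.mpr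
    have h := distortion hΦ k w x y hx hy
    have := (abs_le.mp h).1
    linarith
  -- lower bound on m(C)
  have hup : (1 : ℝ≥0∞) ≤ ENNReal.ofReal (Real.exp (S - c)) * m (cylSet k w) := by
    rw [← hint]
    calc ∫⁻ y in cylSet k w, ENNReal.ofReal (Real.exp (-(birkhoff Φ k y))) ∂m
        ≤ ∫⁻ _ in cylSet k w, ENNReal.ofReal (Real.exp (S - c)) ∂m :=
          setLIntegral_mono' hC hub
      _ = ENNReal.ofReal (Real.exp (S - c)) * m (cylSet k w) := setLIntegral_const _ _
  have hdown : ENNReal.ofReal (Real.exp (-S - c)) * m (cylSet k w) ≤ 1 := by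
    rw [← hint]
    calc ENNReal.ofReal (Real.exp (-S - c)) * m (cylSet k w)
        = ∫⁻ _ in cylSet k w, ENNReal.ofReal (Real.exp (-S - c)) ∂m :=
          (setLIntegral_const _ _).symm
      _ ≤ ∫⁻ y in cylSet k w, ENNReal.ofReal (Real.exp (-(birkhoff Φ k y))) ∂m :=
          setLIntegral_mono' hC hlb
  constructor
  · -- ofReal (exp c / Bk) ≤ m C
    have ha0 : (ENNReal.ofReal (Real.exp (S - c))) ≠ 0 := by
      simp [Real.exp_pos]
    have hat : (ENNReal.ofReal (Real.exp (S - c))) ≠ ⊤ := ENNReal.ofReal_ne_top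
    have hinv : (ENNReal.ofReal (Real.exp (S - c)))⁻¹ = ENNReal.ofReal (Real.exp (c - S)) := by
      rw [← ENNReal.ofReal_inv_of_pos (Real.exp_pos _), ← Real.exp_neg]
      ring_nf
    have : (ENNReal.ofReal (Real.exp (S - c)))⁻¹ ≤ m (cylSet k w) := by
      calc (ENNReal.ofReal (Real.exp (S - c)))⁻¹
          = (ENNReal.ofReal (Real.exp (S - c)))⁻¹ * 1 := (mul_one _).symm
        _ ≤ (ENNReal.ofReal (Real.exp (S - c)))⁻¹
              * (ENNReal.ofReal (Real.exp (S - c)) * m (cylSet k w)) :=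
            mul_le_mul_right hup _
        _ = ((ENNReal.ofReal (Real.exp (S - c)))⁻¹ * ENNReal.ofReal (Real.exp (S - c)))
              * m (cylSet k w) := by rw [mul_assoc]
        _ = m (cylSet k w) := by rw [ENNReal.inv_mul_cancel ha0 hat, one_mul]
    rw [hinv] at this
    have heq : Real.exp c / Bk Φ 0 = Real.exp (c - S) := by
      rw [hB, Real.exp_sub]
    rw [heq]
    exact this
  · -- m C ≤ ofReal (Bk * exp c)
    have hb0 : (ENNReal.ofReal (Real.exp (-S - c))) ≠ 0 := by
      simp [Real.exp_pos]
    have hbt : (ENNReal.ofReal (Real.exp (-S - c))) ≠ ⊤ := ENNReal.ofReal_ne_top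
    have hinv : (ENNReal.ofReal (Real.exp (-S - c)))⁻¹ = ENNReal.ofReal (Real.exp (S + c)) := by
      rw [← ENNReal.ofReal_inv_of_pos (Real.exp_pos _), ← Real.exp_neg]
      ring_nf
    have : m (cylSet k w) ≤ (ENNReal.ofReal (Real.exp (-S - c)))⁻¹ := by
      calc m (cylSet k w)
          = ((ENNReal.ofReal (Real.exp (-S - c)))⁻¹ * ENNReal.ofReal (Real.exp (-S - c)))
              * m (cylSet k w) := by rw [ENNReal.inv_mul_cancel hb0 hbt, one_mul]
        _ = (ENNReal.ofReal (Real.exp (-S - c)))⁻¹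
              * (ENNReal.ofReal (Real.exp (-S - c)) * m (cylSet k w)) := by rw [mul_assoc]
        _ ≤ (ENNReal.ofReal (Real.exp (-S - c)))⁻¹ * 1 := mul_le_mul_right hdown _
        _ = (ENNReal.ofReal (Real.exp (-S - c)))⁻¹ := mul_one _
    rw [hinv] at this
    have heq : Bk Φ 0 * Real.exp c = Real.exp (S + c) := by
      rw [hB, Real.exp_add]
    rw [heq]
    exact this
end

section
/- Suppose Φ : Σ → ℝ is Borel measurable with summable variations; m is a Φ-conformal Borel probability measure on Σ (m(σ(A)) = ∫_A e^{−Φ} dm for every Borel set A contained in a single 1-cylinder); ρ : Σ → (0,∞) is Borel measurable, satisfies ℒ_Φ ρ = ρ pointwise (for every x ∈ Σ, Σ_{i∈ℕ} e^{Φ(ix)} ρ(ix) = ρ(x), the series converging), satisfies V_1(log ρ) ≤ log B_1, and ∫ ρ dm = 1. Then the probability measure μ := ρ·m (dμ = ρ dm) satisfies the Gibbs property with constant B_0^5: for every k ≥ 1, every k-cylinder C and every x ∈ C, B_0^{−5} e^{Φ_k(x)} ≤ μ(C) ≤ B_0^{5} e^{Φ_k(x)}, where Φ_k := Σ_{j=0}^{k−1}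 Φ∘σ^j. -/
open Filter Topology MeasureTheory
open scoped ENNReal

lemma cylSet_zero (w : ℕ → ℕ) : cylSet 0 w = Set.univ := by
  ext x; simp [cylSet]

lemma image_shift (k : ℕ) (w : ℕ → ℕ) :
    shiftMap '' cylSet (k + 1) w = cylSet k (shiftMap w) := by
  ext y; constructor
  · rintro ⟨x, hx, rfl⟩ i hi
    exact hx (i + 1) (by omega)
  · intro hy
    refine ⟨consSeq (w 0) y, ?_, ?_⟩
    · intro i hi
      cases i with
      | zero => rfl
      | succ n => exact hy n (by omega)
    · funext n; rfl

lemma shift_mem (k : ℕ) (w x : ℕ → ℕ) (hx : x ∈ cylSet (k + 1) w) :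
    shiftMap x ∈ cylSet k (shiftMap w) := fun i hi => hx (i + 1) (by omega)

lemma ofReal_abs_le (Φ : (ℕ → ℕ) → ℝ) (k : ℕ) {x y : ℕ → ℕ} (h : SameCyl k x y) :
    ENNReal.ofReal |Φ x - Φ y| ≤ varK Φ k := by
  refine le_trans ?_ (le_iSup _ x)
  refine le_trans ?_ (le_iSup _ y)
  exact le_iSup (fun _ : SameCyl k x y => ENNReal.ofReal |Φ x - Φ y|) h

lemma abs_le_of_sameCyl (Φ : (ℕ → ℕ) → ℝ) (k : ℕ) (hfin : varK Φ k ≠ ⊤)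
    {x y : ℕ → ℕ} (h : SameCyl k x y) : |Φ x - Φ y| ≤ (varK Φ k).toReal := by
  have h1 := ofReal_abs_le Φ k h
  have := ENNReal.toReal_mono hfin h1
  rwa [ENNReal.toReal_ofReal (abs_nonneg _)] at this

lemma mul_exp_le {a b : ℝ} {μ : ℝ≥0∞}
    (h : ENNReal.ofReal (Real.exp a) * μ ≤ ENNReal.ofReal (Real.exp b)) :
    μ ≤ ENNReal.ofReal (Real.exp (b - a)) := by
  have h1 : μ = ENNReal.ofReal (Real.exp (-a)) * (ENNReal.ofReal (Real.exp a) * μ) := by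
    rw [← mul_assoc, ← ENNReal.ofReal_mul (Real.exp_pos _).le, ← Real.exp_add]
    simp
  rw [h1]
  calc ENNReal.ofReal (Real.exp (-a)) * (ENNReal.ofReal (Real.exp a) * μ)
      ≤ ENNReal.ofReal (Real.exp (-a)) * ENNReal.ofReal (Real.exp b) :=
        mul_le_mul_right h _
    _ = ENNReal.ofReal (Real.exp (b - a)) := by
        rw [← ENNReal.ofReal_mul (Real.exp_pos _).le, ← Real.exp_add]
        ring_nf

lemma le_mul_exp {a b : ℝ} {μ : ℝ≥0∞}
    (h : ENNReal.ofReal (Real.exp b) ≤ ENNReal.ofReal (Real.exp a) * μ) :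
    ENNReal.ofReal (Real.exp (b - a)) ≤ μ := by
  have h1 : μ = ENNReal.ofReal (Real.exp (-a)) * (ENNReal.ofReal (Real.exp a) * μ) := by
    rw [← mul_assoc, ← ENNReal.ofReal_mul (Real.exp_pos _).le, ← Real.exp_add]
    simp
  rw [h1]
  calc ENNReal.ofReal (Real.exp (b - a))
      = ENNReal.ofReal (Real.exp (-a)) * ENNReal.ofReal (Real.exp b) := by
        rw [← ENNReal.ofReal_mul (Real.exp_pos _).le, ← Real.exp_add]; ring_nf
    _ ≤ _ := mul_le_mul_right h _

lemma varSumFrom_split (Φ : (ℕ → ℕ) → ℝ) :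
    varSumFrom Φ 1 = varK Φ 1 + varSumFrom Φ 2 := by
  have := tsum_eq_zero_add' (f := fun j : ℕ => varK Φ (j + 1)) ENNReal.summable
  simpa [varSumFrom] using this

/-- If `m` is `Φ`-conformal and `ρ > 0` is a normalised measurable fixed
point of the transfer operator with `V_1(log ρ) ≤ log B_1`, then the invariant measure
`μ = ρ·m` satisfies the Gibbs property with constant `B_0^5`. -/
theorem invariant_gibbs
    (Φ ρ : (ℕ → ℕ) → ℝ) (hΦmeas : Measurable Φ) (hΦ : SummableVar Φ)
    (m : MeasureTheory.Measure (ℕ → ℕ)) [MeasureTheory.IsProbabilityMeasure m]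
    (hconf : ConformalMeasure Φ m)
    (hρpos : ∀ x, 0 < ρ x) (hρmeas : Measurable ρ)
    (hfix : ∀ x, HasSum (fun i : ℕ => Real.exp (Φ (consSeq i x)) * ρ (consSeq i x)) (ρ x))
    (hV1 : varK (fun x => Real.log (ρ x)) 1 ≤ ENNReal.ofReal (Real.log (Bk Φ 1)))
    (hint : ∫ x, ρ x ∂m = 1) :
    ∀ k : ℕ, 1 ≤ k → ∀ w x, x ∈ cylSet k w →
      ENNReal.ofReal (Real.exp (birkhoff Φ k x) / Bk Φ 0 ^ 5) ≤
          (m.withDensity fun x => ENNReal.ofReal (ρ x)) (cylSet k w) ∧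
        (m.withDensity fun x => ENNReal.ofReal (ρ x)) (cylSet k w) ≤
          ENNReal.ofReal (Bk Φ 0 ^ 5 * Real.exp (birkhoff Φ k x)) := by
  have hΦ' : SummableVar Φ := hΦ
  unfold SummableVar at hΦ'
  -- basic constants
  set S : ℝ := (varSumFrom Φ 1).toReal with hS
  have hSnn : 0 ≤ S := ENNReal.toReal_nonneg
  have hB0 : Bk Φ 0 = Real.exp S := rfl
  have hB0ge1 : 1 ≤ Bk Φ 0 := by rw [hB0]; exact Real.one_le_exp hSnn
  have hB0pos : 0 < Bk Φ 0 := lt_of_lt_of_le one_pos hB0ge1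
  -- finiteness of each variation
  have hVfin : ∀ k : ℕ, varK Φ (k + 1) ≠ ⊤ := by
    intro k
    have hle : varK Φ (k + 1) ≤ varSumFrom Φ 1 := ENNReal.le_tsum k
    exact ne_top_of_le_ne_top hΦ' hle
  -- partial sums of variations are ≤ S
  have hCk_le : ∀ k : ℕ, ∑ j ∈ Finset.range k, (varK Φ (j + 1)).toReal ≤ S := by
    intro k
    have h1 : ∑ j ∈ Finset.range k, (varK Φ (j + 1)).toReal
        = (∑ j ∈ Finset.range k, varK Φ (j + 1)).toReal := by
      rw [ENNReal.toReal_sum]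
      intro a _; exact hVfin a
    rw [h1]
    exact ENNReal.toReal_mono hΦ' (ENNReal.sum_le_tsum _)
  have hCk_nn : ∀ k : ℕ, 0 ≤ ∑ j ∈ Finset.range k, (varK Φ (j + 1)).toReal :=
    fun k => Finset.sum_nonneg fun j _ => ENNReal.toReal_nonneg
  -- key Gibbs estimate for m
  have key : ∀ k : ℕ, ∀ w x, x ∈ cylSet k w →
      ENNReal.ofReal (Real.exp (birkhoff Φ k x -
          ∑ j ∈ Finset.range k, (varK Φ (j + 1)).toReal)) ≤ m (cylSet k w) ∧
      m (cylSet k w) ≤ ENNReal.ofReal (Real.exp (birkhoff Φ k x +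
          ∑ j ∈ Finset.range k, (varK Φ (j + 1)).toReal)) := by
    intro k
    induction k with
    | zero =>
      intro w x hx
      simp [cylSet_zero, birkhoff, measure_univ]
    | succ k ih =>
      intro w x hx
      have hsub : cylSet (k + 1) w ⊆ cylSet 1 (fun _ => w 0) := by
        intro y hy i hi
        interval_cases i
        exact hy 0 (by omega)
      have hconf' := hconf (cylSet (k + 1) w) (measurableSet_cylSet _ _) ⟨w 0, hsub⟩
      rw [image_shift] at hconf'
      set V : ℝ := (varK Φ (k + 1)).toReal with hV
      -- pointwise bounds on e^{-Φ} over the cylinder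
      have hpt : ∀ y ∈ cylSet (k + 1) w, |Φ y - Φ x| ≤ V := by
        intro y hy
        refine abs_le_of_sameCyl Φ (k + 1) (hVfin k) ?_
        intro i hi; rw [hy i hi, hx i hi]
      have hup : m (cylSet k (shiftMap w)) ≤
          ENNReal.ofReal (Real.exp (V - Φ x)) * m (cylSet (k + 1) w) := by
        rw [hconf', ← setLIntegral_const]
        refine setLIntegral_mono measurable_const (fun y hy => ?_)
        refine ENNReal.ofReal_le_ofReal (Real.exp_le_exp.2 ?_)
        have := hpt y hy
        have := abs_le.1 this
        linarith [this.1]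
      have hlo : ENNReal.ofReal (Real.exp (-V - Φ x)) * m (cylSet (k + 1) w) ≤
          m (cylSet k (shiftMap w)) := by
        rw [hconf', ← setLIntegral_const]
        refine setLIntegral_mono ((Real.measurable_exp.comp hΦmeas.neg).ennreal_ofReal)
          (fun y hy => ?_)
        refine ENNReal.ofReal_le_ofReal (Real.exp_le_exp.2 ?_)
        have := abs_le.1 (hpt y hy)
        linarith [this.2]
      obtain ⟨ihlo, ihup⟩ := ih (shiftMap w) (shiftMap x) (shift_mem k w x hx)
      constructor
      · -- lower bound
        have h := le_mul_exp (a := V - Φ x)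
          (b := birkhoff Φ k (shiftMap x) - ∑ j ∈ Finset.range k, (varK Φ (j + 1)).toReal)
          (le_trans ihlo hup)
        have harg : birkhoff Φ k (shiftMap x) -
            (∑ j ∈ Finset.range k, (varK Φ (j + 1)).toReal) - (V - Φ x) =
            birkhoff Φ (k + 1) x - ∑ j ∈ Finset.range (k + 1), (varK Φ (j + 1)).toReal := by
          rw [birkhoff_succ, Finset.sum_range_succ, ← hV]
          ring
        rwa [harg] at h
      · -- upper bound
        have h := mul_exp_le (a := -V - Φ x)
          (b := birkhoff Φ k (shiftMap x) + ∑ j ∈ Finset.range k, (varK Φ (j + 1)).toReal)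
          (le_trans hlo ihup)
        have harg : birkhoff Φ k (shiftMap x) +
            (∑ j ∈ Finset.range k, (varK Φ (j + 1)).toReal) - (-V - Φ x) =
            birkhoff Φ (k + 1) x + ∑ j ∈ Finset.range (k + 1), (varK Φ (j + 1)).toReal := by
          rw [birkhoff_succ, Finset.sum_range_succ, ← hV]
          ring
        rwa [harg] at h
  -- bounds on ρ
  have h2fin : varSumFrom Φ 2 ≠ ⊤ := by
    intro h
    rw [varSumFrom_split, h, add_top] at hΦ'
    exact hΦ' rfl
  set S2 : ℝ := (varSumFrom Φ 2).toReal with hS2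
  have hS2nn : 0 ≤ S2 := ENNReal.toReal_nonneg
  have hlogB1 : Real.log (Bk Φ 1) = S2 := Real.log_exp _
  set V1 : ℝ := (varK Φ 1).toReal with hV1def
  have hSsplit : S = V1 + S2 := by
    rw [hS, varSumFrom_split Φ, ENNReal.toReal_add (hVfin 0) h2fin]
  have hρ_ratio : ∀ x y, ρ x ≤ Bk Φ 0 * ρ y := by
    intro x y
    refine hasSum_le (fun i => ?_) (hfix x) ((hfix y).mul_left (Bk Φ 0))
    have hsame : SameCyl 1 (consSeq i x) (consSeq i y) := by
      intro j hj; interval_cases j; rfl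
    -- bound on Φ
    have hΦb : Φ (consSeq i x) ≤ Φ (consSeq i y) + V1 := by
      have := abs_le.1 (abs_le_of_sameCyl Φ 1 (hVfin 0) hsame)
      linarith [this.2]
    -- bound on ρ via log
    have hρb : ρ (consSeq i x) ≤ Real.exp S2 * ρ (consSeq i y) := by
      have hlb : |Real.log (ρ (consSeq i x)) - Real.log (ρ (consSeq i y))| ≤ S2 := by
        have h1 := ofReal_abs_le (fun x => Real.log (ρ x)) 1 hsame
        have h2 := h1.trans hV1
        rw [hlogB1] at h2
        exact (ENNReal.ofReal_le_ofReal_iff hS2nn).1 h2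
      have h3 := (abs_le.1 hlb).2
      have h4 : Real.log (ρ (consSeq i x)) ≤ S2 + Real.log (ρ (consSeq i y)) := by linarith
      calc ρ (consSeq i x) = Real.exp (Real.log (ρ (consSeq i x))) :=
            (Real.exp_log (hρpos _)).symm
        _ ≤ Real.exp (S2 + Real.log (ρ (consSeq i y))) := Real.exp_le_exp.2 h4
        _ = Real.exp S2 * ρ (consSeq i y) := by
            rw [Real.exp_add, Real.exp_log (hρpos _)]
    calc Real.exp (Φ (consSeq i x)) * ρ (consSeq i x)
        ≤ Real.exp (Φ (consSeq i y) + V1) * (Real.exp S2 * ρ (consSeq i y)) := by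
          apply mul_le_mul (Real.exp_le_exp.2 hΦb) hρb (hρpos _).le (Real.exp_pos _).le
      _ = Bk Φ 0 * (Real.exp (Φ (consSeq i y)) * ρ (consSeq i y)) := by
          rw [hB0, hSsplit, Real.exp_add, Real.exp_add]; ring
  have hInt : Integrable ρ m := by
    by_contra h
    rw [integral_undef h] at hint
    norm_num at hint
  have hρ_ub : ∀ x, ρ x ≤ Bk Φ 0 := by
    intro x
    have h1 : ∫ (y : ℕ → ℕ), ρ x ∂m ≤ ∫ y, Bk Φ 0 * ρ y ∂m :=
      integral_mono (integrable_const _) (hInt.const_mul _) (fun y => hρ_ratio x y)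
    rwa [integral_const, integral_const_mul, hint, mul_one, probReal_univ,
      one_smul] at h1
  have hρ_lb : ∀ x, (Bk Φ 0)⁻¹ ≤ ρ x := by
    intro x
    have h1 : ∫ (y : ℕ → ℕ), (Bk Φ 0)⁻¹ * ρ y ∂m ≤ ∫ (y : ℕ → ℕ), ρ x ∂m := by
      refine integral_mono (hInt.const_mul _) (integrable_const _) (fun y => ?_)
      rw [inv_mul_le_iff₀ hB0pos]
      exact hρ_ratio y x
    rwa [integral_const, integral_const_mul, hint, mul_one, probReal_univ,
      one_smul] at h1
  -- conclusion
  intro k hk w x hx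
  obtain ⟨klo, kup⟩ := key k w x hx
  have hμ : (m.withDensity fun x => ENNReal.ofReal (ρ x)) (cylSet k w) =
      ∫⁻ y in cylSet k w, ENNReal.ofReal (ρ y) ∂m :=
    withDensity_apply _ (measurableSet_cylSet k w)
  set Ck : ℝ := ∑ j ∈ Finset.range k, (varK Φ (j + 1)).toReal with hCkdef
  have hCkS : Ck ≤ S := hCk_le k
  have hCn : 0 ≤ Ck := hCk_nn k
  have hexpCk : Real.exp Ck ≤ Bk Φ 0 := by rw [hB0]; exact Real.exp_le_exp.2 hCkS
  have hexpCk1 : 1 ≤ Real.exp Ck := Real.one_le_exp hCn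
  set E : ℝ := Real.exp (birkhoff Φ k x) with hE
  have hEpos : 0 < E := Real.exp_pos _
  constructor
  · -- lower bound
    have h1 : ENNReal.ofReal ((Bk Φ 0)⁻¹) * m (cylSet k w) ≤
        (m.withDensity fun x => ENNReal.ofReal (ρ x)) (cylSet k w) := by
      rw [hμ, ← setLIntegral_const]
      exact setLIntegral_mono hρmeas.ennreal_ofReal
        (fun y _ => ENNReal.ofReal_le_ofReal (hρ_lb y))
    have h2 : ENNReal.ofReal ((Bk Φ 0)⁻¹) * ENNReal.ofReal (Real.exp (birkhoff Φ k x - Ck)) ≤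
        ENNReal.ofReal ((Bk Φ 0)⁻¹) * m (cylSet k w) := mul_le_mul_right klo _
    refine le_trans ?_ (h2.trans h1)
    rw [← ENNReal.ofReal_mul (by positivity)]
    refine ENNReal.ofReal_le_ofReal ?_
    rw [Real.exp_sub, ← hE]
    have hBC : 0 < Bk Φ 0 * Real.exp Ck := by positivity
    have hstep : Bk Φ 0 * Real.exp Ck ≤ Bk Φ 0 ^ 5 := by
      have h25 : Bk Φ 0 ^ 2 ≤ Bk Φ 0 ^ 5 := pow_le_pow_right₀ hB0ge1 (by norm_num)
      nlinarith
    have heq : (Bk Φ 0)⁻¹ * (E / Real.exp Ck) = E / (Bk Φ 0 * Real.exp Ck) := by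
      field_simp
    rw [heq]
    exact div_le_div_of_nonneg_left hEpos.le hBC hstep
  · -- upper bound
    have h1 : (m.withDensity fun x => ENNReal.ofReal (ρ x)) (cylSet k w) ≤
        ENNReal.ofReal (Bk Φ 0) * m (cylSet k w) := by
      rw [hμ, ← setLIntegral_const]
      exact setLIntegral_mono measurable_const
        (fun y _ => ENNReal.ofReal_le_ofReal (hρ_ub y))
    have h2 : ENNReal.ofReal (Bk Φ 0) * m (cylSet k w) ≤
        ENNReal.ofReal (Bk Φ 0) * ENNReal.ofReal (Real.exp (birkhoff Φ k x + Ck)) :=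
      mul_le_mul_right kup _
    refine (h1.trans h2).trans ?_
    rw [← ENNReal.ofReal_mul hB0pos.le]
    refine ENNReal.ofReal_le_ofReal ?_
    rw [Real.exp_add, ← hE]
    have hstep : Bk Φ 0 * Real.exp Ck ≤ Bk Φ 0 ^ 5 := by
      have h25 : Bk Φ 0 ^ 2 ≤ Bk Φ 0 ^ 5 := pow_le_pow_right₀ hB0ge1 (by norm_num)
      nlinarith
    nlinarith [mul_le_mul_of_nonneg_right hstep hEpos.le]
end

section
/- Let I = [0,1]. For each n ≥ 0 let f_n : I → I be continuous, with sup_{x∈I} |f_n(x) − f_0(x)| → 0 as n → ∞. For each n ≥ 0 let (C_n^i)_{i∈ℕ} be pairwise disjoint subintervals of I, let τ_n^i ≥ 1 be integers, and define F_n on ∪_i C_n^i by F_n|_{C_n^i} = f_n^{τ_n^i}. For each n ≥ 1 let μ_n be a Borel probability measure on I with μ_n(∪_i C_n^i) = 1 which is F_n-invariant (the pushforward of μ_n under F_n equals μ_n), and suppose μ_n → μ_∞ in the weak* topology. Assume: (i) for every ε > 0 there exists N ∈ ℕ such that for all sufficiently large n, Σ_{i : τ_n^i > N} μ_n(C_n^i)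 < ε; (ii) for each i ∈ ℕ, τ_n^i = τ_0^i for all sufficiently large n, and μ_n(C_n^i △ C_0^i) → 0 as n → ∞; (iii) μ_∞(∪_i C_0^i) = 1 and μ_∞(∂C_0^i) = 0 for every i. Then μ_∞ is F_0-invariant: ∫ φ∘F_0 dμ_∞ = ∫ φ dμ_∞ for every continuous φ : I → ℝ. -/
open Set MeasureTheory Filter Topology
open scoped ENNReal symmDiff

noncomputable section

/-- The unit interval `I = [0,1]` as a subset of `ℝ`. -/
def unitI : Set ℝ := Set.Icc 0 1

lemma unitI_compact : IsCompact unitI := isCompact_Icc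

lemma iter_mapsTo {f : ℝ → ℝ} (hf : Set.MapsTo f unitI unitI) (k : ℕ) :
    Set.MapsTo (f^[k]) unitI unitI := hf.iterate k

lemma iter_unif (f : ℕ → ℝ → ℝ) (hfc : ∀ n, Continuous (f n))
    (hfI : ∀ n, Set.MapsTo (f n) unitI unitI)
    (hfconv : TendstoUniformlyOn (fun n x => f n x) (f 0) atTop unitI) (k : ℕ) :
    TendstoUniformlyOn (fun n x => (f n)^[k] x) ((f 0)^[k]) atTop unitI := by
  induction k with
  | zero =>
    simp only [Function.iterate_zero, id]
    rw [Metric.tendstoUniformlyOn_iff]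
    intro ε hε
    exact Eventually.of_forall fun n x _ => by simpa using hε
  | succ k ih =>
    rw [Metric.tendstoUniformlyOn_iff]
    intro ε hε
    have hUC : UniformContinuousOn (f 0) unitI :=
      unitI_compact.uniformContinuousOn_of_continuous (hfc 0).continuousOn
    rw [Metric.uniformContinuousOn_iff] at hUC
    obtain ⟨δ, hδ, hδ'⟩ := hUC (ε/2) (half_pos hε)
    have h1 := (Metric.tendstoUniformlyOn_iff.1 ih) δ hδ
    have h2 := (Metric.tendstoUniformlyOn_iff.1 hfconv) (ε/2) (half_pos hε)
    filter_upwards [h1, h2] with n hn1 hn2 x hx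
    have hxk : (f n)^[k] x ∈ unitI := iter_mapsTo (hfI n) k hx
    have hxk0 : (f 0)^[k] x ∈ unitI := iter_mapsTo (hfI 0) k hx
    have e1 : dist ((f 0) ((f 0)^[k] x)) ((f 0) ((f n)^[k] x)) < ε/2 :=
      hδ' _ hxk0 _ hxk (hn1 x hx)
    have e2 : dist ((f 0) ((f n)^[k] x)) ((f n) ((f n)^[k] x)) < ε/2 := hn2 _ hxk
    rw [Function.iterate_succ_apply', Function.iterate_succ_apply']
    calc dist ((f 0) ((f 0)^[k] x)) ((f n) ((f n)^[k] x))
        ≤ dist ((f 0) ((f 0)^[k] x)) ((f 0) ((f n)^[k] x))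
          + dist ((f 0) ((f n)^[k] x)) ((f n) ((f n)^[k] x)) := dist_triangle _ _ _
      _ < ε/2 + ε/2 := add_lt_add e1 e2
      _ = ε := add_halves ε

lemma phi_iter_unif (f : ℕ → ℝ → ℝ) (hfc : ∀ n, Continuous (f n))
    (hfI : ∀ n, Set.MapsTo (f n) unitI unitI)
    (hfconv : TendstoUniformlyOn (fun n x => f n x) (f 0) atTop unitI) (k : ℕ)
    {φ : ℝ → ℝ} (hφ : Continuous φ) {η : ℝ} (hη : 0 < η) :
    ∀ᶠ n in atTop, ∀ x ∈ unitI, |φ ((f n)^[k] x) - φ ((f 0)^[k] x)| ≤ η := by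
  have hUC : UniformContinuousOn φ unitI :=
    unitI_compact.uniformContinuousOn_of_continuous hφ.continuousOn
  rw [Metric.uniformContinuousOn_iff] at hUC
  obtain ⟨δ, hδ, hδ'⟩ := hUC η hη
  have h1 := (Metric.tendstoUniformlyOn_iff.1 (iter_unif f hfc hfI hfconv k)) δ hδ
  filter_upwards [h1] with n hn x hx
  have hxk : (f n)^[k] x ∈ unitI := iter_mapsTo (hfI n) k hx
  have hxk0 : (f 0)^[k] x ∈ unitI := iter_mapsTo (hfI 0) k hx
  have := hδ' _ hxk _ hxk0 (by rw [dist_comm]; exact hn x hx)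
  rw [Real.dist_eq] at this
  exact this.le

lemma meas_toReal_diff_le {μ : Measure ℝ} [IsFiniteMeasure μ] {A B : Set ℝ} :
    |(μ A).toReal - (μ B).toReal| ≤ (μ (A ∆ B)).toReal := by
  have h1 : μ A ≤ μ B + μ (A ∆ B) := by
    calc μ A ≤ μ (B ∪ A ∆ B) := by
          apply measure_mono
          intro x hx
          by_cases hb : x ∈ B
          · exact Or.inl hb
          · exact Or.inr (Or.inl ⟨hx, hb⟩)
      _ ≤ μ B + μ (A ∆ B) := measure_union_le _ _
  have h2 : μ B ≤ μ A + μ (A ∆ B) := by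
    calc μ B ≤ μ (A ∪ A ∆ B) := by
          apply measure_mono
          intro x hx
          by_cases ha : x ∈ A
          · exact Or.inl ha
          · exact Or.inr (Or.inr ⟨hx, ha⟩)
      _ ≤ μ A + μ (A ∆ B) := measure_union_le _ _
  rw [abs_sub_le_iff]
  constructor
  · have := ENNReal.toReal_mono (by finiteness) h1
    rw [ENNReal.toReal_add (measure_ne_top _ _) (measure_ne_top _ _)] at this
    linarith
  · have := ENNReal.toReal_mono (by finiteness) h2
    rw [ENNReal.toReal_add (measure_ne_top _ _) (measure_ne_top _ _)] at this
    linarith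

lemma setIntegral_symmdiff_bound {μ : Measure ℝ} [IsProbabilityMeasure μ] {A B : Set ℝ}
    (hA : MeasurableSet A) (hB : MeasurableSet B) {g : ℝ → ℝ} {M : ℝ}
    (hgc : Continuous g) (hb : ∀ x, |g x| ≤ M) :
    |∫ x in A, g x ∂μ - ∫ x in B, g x ∂μ| ≤ M * (μ (A ∆ B)).toReal := by
  have hint : Integrable g μ := (integrable_const M).mono' hgc.aestronglyMeasurable
    (ae_of_all _ (by simpa using hb))
  have hAB : MeasurableSet (A ∩ B) := hA.inter hB
  have hga : ∫ x in A, g x ∂μ = ∫ x in A ∩ B, g x ∂μ + ∫ x in A \ B, g x ∂μ := by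
    have hdisj : Disjoint (A ∩ B) (A \ B) :=
      Set.disjoint_left.2 fun a ha hb' => hb'.2 ha.2
    have h := setIntegral_union (s := A ∩ B) (t := A \ B) (f := g) (μ := μ) hdisj
      (hA.diff hB) hint.integrableOn hint.integrableOn
    rwa [Set.inter_union_diff] at h
  have hgb : ∫ x in B, g x ∂μ = ∫ x in A ∩ B, g x ∂μ + ∫ x in B \ A, g x ∂μ := by
    have hdisj : Disjoint (A ∩ B) (B \ A) :=
      Set.disjoint_left.2 fun a ha hb' => hb'.2 ha.1
    have h := setIntegral_union (s := A ∩ B) (t := B \ A) (f := g) (μ := μ) hdisj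
      (hB.diff hA) hint.integrableOn hint.integrableOn
    rw [Set.inter_comm, Set.inter_union_diff] at h
    rw [Set.inter_comm] at h
    exact h
  rw [hga, hgb]
  have e1 : |∫ x in A \ B, g x ∂μ| ≤ M * (μ (A \ B)).toReal := by
    rw [← Real.norm_eq_abs]
    exact norm_setIntegral_le_of_norm_le_const (measure_lt_top _ _)
      (fun x _ => by rw [Real.norm_eq_abs]; exact hb x)
  have e2 : |∫ x in B \ A, g x ∂μ| ≤ M * (μ (B \ A)).toReal := by
    rw [← Real.norm_eq_abs]
    exact norm_setIntegral_le_of_norm_le_const (measure_lt_top _ _)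
      (fun x _ => by rw [Real.norm_eq_abs]; exact hb x)
  have hadd : (μ (A ∆ B)).toReal = (μ (A \ B)).toReal + (μ (B \ A)).toReal := by
    rw [Set.symmDiff_def, measure_union (Set.disjoint_left.2 fun a ha hb' => ha.2 hb'.1)
      (hB.diff hA), ENNReal.toReal_add (measure_ne_top _ _) (measure_ne_top _ _)]
  calc |(∫ x in A ∩ B, g x ∂μ + ∫ x in A \ B, g x ∂μ)
        - (∫ x in A ∩ B, g x ∂μ + ∫ x in B \ A, g x ∂μ)|
      = |∫ x in A \ B, g x ∂μ - ∫ x in B \ A, g x ∂μ| := by ring_nf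
    _ ≤ |∫ x in A \ B, g x ∂μ| + |∫ x in B \ A, g x ∂μ| := abs_sub _ _
    _ ≤ M * (μ (A \ B)).toReal + M * (μ (B \ A)).toReal := add_le_add e1 e2
    _ = M * (μ (A ∆ B)).toReal := by rw [hadd]; ring

lemma bdd_cont_integrable {μ : Measure ℝ} [IsProbabilityMeasure μ] {u : ℝ → ℝ} {K : ℝ}
    (hu : Continuous u) (hb : ∀ x, |u x| ≤ K) : Integrable u μ :=
  (integrable_const K).mono' hu.aestronglyMeasurable (ae_of_all _ (by simpa using hb))

lemma tendsto_integral_of_sandwich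
    (μ : ℕ → Measure ℝ) (μlim : Measure ℝ)
    [∀ n, IsProbabilityMeasure (μ n)] [IsProbabilityMeasure μlim]
    (hweak : ∀ φ : ℝ → ℝ, Continuous φ →
      Tendsto (fun n => ∫ x, φ x ∂μ n) atTop (nhds (∫ x, φ x ∂μlim)))
    (g : ℝ → ℝ)
    (hgint : ∀ n, Integrable g (μ n)) (hgintlim : Integrable g μlim)
    (h : ∀ δ > (0:ℝ), ∃ u v : ℝ → ℝ, Continuous u ∧ Continuous v ∧
      (∃ K, ∀ x, |u x| ≤ K) ∧ (∃ K, ∀ x, |v x| ≤ K) ∧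
      (∀ x, u x ≤ g x) ∧ (∀ x, g x ≤ v x) ∧ ∫ x, (v x - u x) ∂μlim ≤ δ) :
    Tendsto (fun n => ∫ x, g x ∂μ n) atTop (nhds (∫ x, g x ∂μlim)) := by
  rw [Metric.tendsto_atTop]
  intro ε hε
  obtain ⟨u, v, hu, hv, ⟨Ku, hKu⟩, ⟨Kv, hKv⟩, hug, hgv, hgap⟩ := h (ε/3) (by linarith)
  have hui : ∀ n, Integrable u (μ n) := fun n => bdd_cont_integrable hu hKu
  have hvi : ∀ n, Integrable v (μ n) := fun n => bdd_cont_integrable hv hKv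
  have huil : Integrable u μlim := bdd_cont_integrable hu hKu
  have hvil : Integrable v μlim := bdd_cont_integrable hv hKv
  have h1 := (hweak u hu).eventually (Metric.ball_mem_nhds _ (by linarith : (0:ℝ) < ε/3))
  have h2 := (hweak v hv).eventually (Metric.ball_mem_nhds _ (by linarith : (0:ℝ) < ε/3))
  rw [eventually_atTop] at h1 h2
  obtain ⟨N1, hN1⟩ := h1; obtain ⟨N2, hN2⟩ := h2
  refine ⟨max N1 N2, fun n hn => ?_⟩
  have e1 := hN1 n (le_trans (le_max_left _ _) hn)
  have e2 := hN2 n (le_trans (le_max_right _ _) hn)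
  rw [Real.dist_eq] at e1 e2
  rw [Real.dist_eq]
  have hgapR : ∫ x, v x ∂μlim - ∫ x, u x ∂μlim ≤ ε/3 := by
    rw [← integral_sub hvil huil]; exact hgap
  have i1 : ∫ x, g x ∂μ n ≤ ∫ x, v x ∂μ n := integral_mono (hgint n) (hvi n) hgv
  have i2 : ∫ x, u x ∂μ n ≤ ∫ x, g x ∂μ n := integral_mono (hui n) (hgint n) hug
  have i3 : ∫ x, u x ∂μlim ≤ ∫ x, g x ∂μlim := integral_mono huil hgintlim hug
  have i4 : ∫ x, g x ∂μlim ≤ ∫ x, v x ∂μlim := integral_mono hgintlim hvil hgv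
  rw [abs_lt] at e1 e2 ⊢
  constructor <;> [nlinarith [e1.1, e2.2]; nlinarith [e1.2, e2.1]]

lemma small_Icc (μlim : Measure ℝ) [IsProbabilityMeasure μlim] (c : ℝ) (hc : μlim {c} = 0)
    {η : ℝ} (hη : 0 < η) :
    ∃ δ > (0:ℝ), (μlim (Set.Icc (c - δ) (c + δ))).toReal < η := by
  have hInt : ⋂ k : ℕ, Set.Icc (c - 1/(k+1)) (c + 1/(k+1)) = {c} := by
    ext x
    simp only [Set.mem_iInter, Set.mem_Icc, Set.mem_singleton_iff]
    constructor
    · intro h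
      have : ∀ k : ℕ, |x - c| ≤ 1/(k+1) := fun k => abs_sub_le_iff.2
        ⟨by linarith [(h k).2], by linarith [(h k).1]⟩
      have hx : |x - c| ≤ 0 := by
        by_contra hcon
        push_neg at hcon
        obtain ⟨k, hk⟩ := exists_nat_one_div_lt hcon
        exact absurd (this k) (by push_cast; push_cast at hk; linarith)
      have := abs_nonneg (x - c)
      have : |x - c| = 0 := le_antisymm hx this
      rw [abs_eq_zero] at this; linarith [sub_eq_zero.mp this]
    · rintro rfl k
      have hk : (0:ℝ) < 1/(k+1) := by positivity
      constructor <;> linarith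
  have htend := tendsto_measure_iInter_atTop (μ := μlim)
    (s := fun k : ℕ => Set.Icc (c - 1/(k+1)) (c + 1/(k+1)))
    (fun k => (measurableSet_Icc).nullMeasurableSet)
    (fun k l hkl => by
      apply Set.Icc_subset_Icc <;>
      · have hk : (1:ℝ)/(l+1) ≤ 1/(k+1) := by
          apply one_div_le_one_div_of_le <;> push_cast <;>
            [positivity; exact_mod_cast by exact_mod_cast add_le_add_left (Nat.cast_le.2 hkl) 1]
        linarith)
    ⟨0, measure_ne_top _ _⟩
  rw [hInt, hc] at htend
  have : ∀ᶠ k : ℕ in atTop, μlim (Set.Icc (c - 1/(k+1)) (c + 1/(k+1))) < ENNReal.ofReal η :=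
    htend.eventually_lt_const (by simp [hη])
  obtain ⟨k, hk⟩ := this.exists
  refine ⟨1/(k+1), by positivity, ?_⟩
  have := ENNReal.toReal_lt_toReal (measure_ne_top _ _) (ENNReal.ofReal_ne_top) |>.2 hk
  rwa [ENNReal.toReal_ofReal hη.le] at this

lemma indicator_sandwich (μlim : Measure ℝ) [IsProbabilityMeasure μlim] {C : Set ℝ}
    (hCoc : C.OrdConnected) (hCb : C ⊆ unitI) (hfr : μlim (frontier C) = 0)
    {δ : ℝ} (hδ : 0 < δ) :
    ∃ u v : ℝ → ℝ, Continuous u ∧ Continuous v ∧ (∀ x, 0 ≤ u x) ∧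
      (∀ x, u x ≤ C.indicator (1 : ℝ → ℝ) x) ∧ (∀ x, C.indicator (1 : ℝ → ℝ) x ≤ v x) ∧ (∀ x, v x ≤ 1) ∧
      ∫ x, (v x - u x) ∂μlim ≤ δ := by
  rcases Set.eq_empty_or_nonempty C with rfl | hne
  · exact ⟨0, 0, continuous_const, continuous_const, fun x => le_refl 0,
      fun x => by simp, fun x => by simp, fun x => by simp [zero_le_one], by simp [hδ.le]⟩
  set a := sInf C with ha
  set b := sSup C with hb
  have hbdd : BddBelow C := ⟨0, fun x hx => (hCb hx).1⟩
  have hbdda : BddAbove C := ⟨1, fun x hx => (hCb hx).2⟩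
  have hsub : C ⊆ Set.Icc a b := fun x hx => ⟨csInf_le hbdd hx, le_csSup hbdda hx⟩
  have hIoo : Set.Ioo a b ⊆ C := by
    intro x hx
    obtain ⟨c, hc, hcx⟩ := exists_lt_of_csInf_lt hne hx.1
    obtain ⟨e, he, hxe⟩ := exists_lt_of_lt_csSup hne hx.2
    exact hCoc.out hc he ⟨hcx.le, hxe.le⟩
  have hab : a ≤ b :=
    le_trans (csInf_le hbdd hne.some_mem) (le_csSup hbdda hne.some_mem)
  -- a and b are in the frontier of C
  have hafr : a ∈ frontier C := by
    rw [frontier, Set.mem_diff]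
    refine ⟨csInf_mem_closure hne hbdd, fun hint => ?_⟩
    obtain ⟨ε, hε, hball⟩ := Metric.isOpen_iff.mp isOpen_interior a hint
    have : a - ε/2 ∈ C := interior_subset (hball (by
      rw [Metric.mem_ball, Real.dist_eq]
      rw [abs_of_nonpos (by linarith)]; linarith))
    linarith [csInf_le hbdd this]
  have hbfr : b ∈ frontier C := by
    rw [frontier, Set.mem_diff]
    refine ⟨csSup_mem_closure hne hbdda, fun hint => ?_⟩
    obtain ⟨ε, hε, hball⟩ := Metric.isOpen_iff.mp isOpen_interior b hint
    have : b + ε/2 ∈ C := interior_subset (hball (by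
      rw [Metric.mem_ball, Real.dist_eq]
      rw [abs_of_nonneg (by linarith)]; linarith))
    linarith [le_csSup hbdda this]
  have hma : μlim {a} = 0 :=
    measure_mono_null (Set.singleton_subset_iff.2 hafr) hfr
  have hmb : μlim {b} = 0 :=
    measure_mono_null (Set.singleton_subset_iff.2 hbfr) hfr
  obtain ⟨δa, hδa, hδa2⟩ := small_Icc μlim a hma (half_pos hδ)
  obtain ⟨δb, hδb, hδb2⟩ := small_Icc μlim b hmb (half_pos hδ)
  set d := min δa δb with hdd
  have hd : 0 < d := lt_min hδa hδb
  set u : ℝ → ℝ := fun x => max 0 (min ((x - a)/d) (min ((b - x)/d) 1)) with hu_def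
  set v : ℝ → ℝ := fun x => max 0 (min ((x - (a - d))/d) (min (((b + d) - x)/d) 1)) with hv_def
  have hu_cont : Continuous u := by fun_prop
  have hv_cont : Continuous v := by fun_prop
  have hu0 : ∀ x, 0 ≤ u x := fun x => le_max_left _ _
  have hu1 : ∀ x, u x ≤ 1 := fun x =>
    max_le zero_le_one ((min_le_right _ _).trans (min_le_right _ _))
  have hv0 : ∀ x, 0 ≤ v x := fun x => le_max_left _ _
  have hv1 : ∀ x, v x ≤ 1 := fun x =>
    max_le zero_le_one ((min_le_right _ _).trans (min_le_right _ _))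
  have huind : ∀ x, u x ≤ C.indicator (1 : ℝ → ℝ) x := by
    intro x
    by_cases hx : x ∈ C
    · rw [Set.indicator_of_mem hx]; exact hu1 x
    · rw [Set.indicator_of_notMem hx]
      have hx' : x ≤ a ∨ b ≤ x := by
        by_contra hcon
        push_neg at hcon
        exact hx (hIoo ⟨hcon.1, hcon.2⟩)
      rcases hx' with h | h
      · have : (x - a)/d ≤ 0 := div_nonpos_of_nonpos_of_nonneg (by linarith) hd.le
        exact max_le le_rfl ((min_le_left _ _).trans this)
      · have : (b - x)/d ≤ 0 := div_nonpos_of_nonpos_of_nonneg (by linarith) hd.le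
        exact max_le le_rfl ((min_le_right _ _).trans ((min_le_left _ _).trans this))
  have hindv : ∀ x, C.indicator (1 : ℝ → ℝ) x ≤ v x := by
    intro x
    by_cases hx : x ∈ C
    · rw [Set.indicator_of_mem hx]
      have h1 : a ≤ x := (hsub hx).1
      have h2 : x ≤ b := (hsub hx).2
      have e1 : (1:ℝ) ≤ (x - (a - d))/d := (one_le_div hd).2 (by linarith)
      have e2 : (1:ℝ) ≤ ((b + d) - x)/d := (one_le_div hd).2 (by linarith)
      have : (1:ℝ) ≤ min ((x - (a - d))/d) (min (((b + d) - x)/d) 1) :=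
        le_min e1 (le_min e2 le_rfl)
      exact this.trans (le_max_right _ _)
    · rw [Set.indicator_of_notMem hx]; exact hv0 x
  have hgap : ∀ x, v x - u x ≤
      (Set.Icc (a - d) (a + d)).indicator (1 : ℝ → ℝ) x + (Set.Icc (b - d) (b + d)).indicator (1 : ℝ → ℝ) x := by
    intro x
    by_cases h1 : x ∈ Set.Icc (a - d) (a + d)
    · rw [Set.indicator_of_mem h1]
      have : (0:ℝ) ≤ (Set.Icc (b - d) (b + d)).indicator (1 : ℝ → ℝ) x :=
        Set.indicator_nonneg (fun _ _ => zero_le_one) x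
      have := hv1 x; have := hu0 x
      simp only [Pi.one_apply]; linarith
    · by_cases h2 : x ∈ Set.Icc (b - d) (b + d)
      · rw [Set.indicator_of_mem h2]
        have : (0:ℝ) ≤ (Set.Icc (a - d) (a + d)).indicator (1 : ℝ → ℝ) x :=
          Set.indicator_nonneg (fun _ _ => zero_le_one) x
        have := hv1 x; have := hu0 x
        simp only [Pi.one_apply]; linarith
      · rw [Set.indicator_of_notMem h1, Set.indicator_of_notMem h2]
        rw [Set.mem_Icc, not_and_or, not_le, not_le] at h1 h2
        rcases h1 with h1 | h1
        · -- x < a - d : v x = 0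
          have hv_eq : v x = 0 := by
            have : (x - (a - d))/d ≤ 0 := div_nonpos_of_nonpos_of_nonneg (by linarith) hd.le
            exact le_antisymm (max_le le_rfl ((min_le_left _ _).trans this)) (hv0 x)
          have := hu0 x; linarith
        · rcases h2 with h2 | h2
          · -- a + d < x and x < b - d : u x = 1
            have e1 : (1:ℝ) ≤ (x - a)/d := (one_le_div hd).2 (by linarith)
            have e2 : (1:ℝ) ≤ (b - x)/d := (one_le_div hd).2 (by linarith)
            have hu_ge : (1:ℝ) ≤ u x :=
              (le_min e1 (le_min e2 le_rfl)).trans (le_max_right _ _)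
            have := hv1 x; linarith
          · -- b + d < x : v x = 0
            have hv_eq : v x = 0 := by
              have : ((b + d) - x)/d ≤ 0 := div_nonpos_of_nonpos_of_nonneg (by linarith) hd.le
              exact le_antisymm
                (max_le le_rfl ((min_le_right _ _).trans ((min_le_left _ _).trans this)))
                (hv0 x)
            have := hu0 x; linarith
  refine ⟨u, v, hu_cont, hv_cont, hu0, huind, hindv, hv1, ?_⟩
  have hint1 : Integrable (fun x => v x - u x) μlim :=
    bdd_cont_integrable (hv_cont.sub hu_cont)
      (K := 1) (fun x => abs_le.2 ⟨by linarith [hu1 x, hv0 x], by linarith [hv1 x, hu0 x]⟩)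
  have hint2 : Integrable (fun x => (Set.Icc (a - d) (a + d)).indicator (1 : ℝ → ℝ) x
      + (Set.Icc (b - d) (b + d)).indicator (1 : ℝ → ℝ) x) μlim := by
    apply Integrable.add
    · exact (integrable_const (1:ℝ)).indicator measurableSet_Icc
    · exact (integrable_const (1:ℝ)).indicator measurableSet_Icc
  have hda : d ≤ δa := min_le_left _ _
  have hdb : d ≤ δb := min_le_right _ _
  have hint2a : Integrable ((Set.Icc (a - d) (a + d)).indicator (1 : ℝ → ℝ)) μlim :=
    (integrable_const (1:ℝ)).indicator measurableSet_Icc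
  have hint2b : Integrable ((Set.Icc (b - d) (b + d)).indicator (1 : ℝ → ℝ)) μlim :=
    (integrable_const (1:ℝ)).indicator measurableSet_Icc
  have m1 : (μlim (Set.Icc (a - d) (a + d))).toReal ≤ (μlim (Set.Icc (a - δa) (a + δa))).toReal :=
    ENNReal.toReal_mono (measure_ne_top _ _)
      (measure_mono (Set.Icc_subset_Icc (by linarith) (by linarith)))
  have m2 : (μlim (Set.Icc (b - d) (b + d))).toReal ≤ (μlim (Set.Icc (b - δb) (b + δb))).toReal :=
    ENNReal.toReal_mono (measure_ne_top _ _)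
      (measure_mono (Set.Icc_subset_Icc (by linarith) (by linarith)))
  calc ∫ x, (v x - u x) ∂μlim
      ≤ ∫ x, ((Set.Icc (a - d) (a + d)).indicator (1 : ℝ → ℝ) x
          + (Set.Icc (b - d) (b + d)).indicator (1 : ℝ → ℝ) x) ∂μlim :=
        integral_mono hint1 (hint2a.add hint2b) hgap
    _ = (μlim (Set.Icc (a - d) (a + d))).toReal + (μlim (Set.Icc (b - d) (b + d))).toReal := by
        rw [integral_add hint2a hint2b, integral_indicator_one measurableSet_Icc,
          integral_indicator_one measurableSet_Icc]
        rfl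
    _ ≤ δ := by linarith

lemma indicator_bdd_integrable {μ : Measure ℝ} [IsProbabilityMeasure μ] {A : Set ℝ}
    (hA : MeasurableSet A) {g : ℝ → ℝ} (hg : Measurable g) {K : ℝ}
    (hb : ∀ x, |A.indicator g x| ≤ K) : Integrable (A.indicator g) μ :=
  (integrable_const K).mono' (hg.indicator hA).aestronglyMeasurable
    (ae_of_all _ (by simpa using hb))

lemma tendsto_setIntegral_cyl
    (μ : ℕ → Measure ℝ) (μlim : Measure ℝ)
    [∀ n, IsProbabilityMeasure (μ n)] [IsProbabilityMeasure μlim]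
    (hweak : ∀ φ : ℝ → ℝ, Continuous φ →
      Tendsto (fun n => ∫ x, φ x ∂μ n) atTop (nhds (∫ x, φ x ∂μlim)))
    {C : Set ℝ} (hCoc : C.OrdConnected) (hCb : C ⊆ unitI) (hfr : μlim (frontier C) = 0)
    {ψ : ℝ → ℝ} (hψ : Continuous ψ) {M : ℝ} (hM : ∀ x, |ψ x| ≤ M) :
    Tendsto (fun n => ∫ x in C, ψ x ∂μ n) atTop (nhds (∫ x in C, ψ x ∂μlim)) := by
  have hCm : MeasurableSet C := hCoc.measurableSet
  have hM0 : 0 ≤ M := (abs_nonneg _).trans (hM 0)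
  set g1 : ℝ → ℝ := C.indicator (fun y => ψ y + M) with hg1
  set g2 : ℝ → ℝ := C.indicator (1 : ℝ → ℝ) with hg2
  have hψM : ∀ x, 0 ≤ ψ x + M := fun x => by have := abs_le.1 (hM x); linarith
  have hψ2M : ∀ x, ψ x + M ≤ 2*M := fun x => by have := abs_le.1 (hM x); linarith
  have hg1b : ∀ x, |g1 x| ≤ 2*M := by
    intro x
    by_cases hx : x ∈ C
    · rw [hg1, Set.indicator_of_mem hx]
      exact abs_le.2 ⟨by linarith [hψM x], hψ2M x⟩
    · rw [hg1, Set.indicator_of_notMem hx]; simpa using by linarith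
  have hg2b : ∀ x, |g2 x| ≤ 1 := by
    intro x
    by_cases hx : x ∈ C
    · rw [hg2, Set.indicator_of_mem hx]; simp
    · rw [hg2, Set.indicator_of_notMem hx]; simp
  have hg1m : Measurable g1 := (hψ.measurable.add_const M).indicator hCm
  have hg1eq : ∀ x, g1 x = g2 x * (ψ x + M) := by
    intro x
    by_cases hx : x ∈ C <;>
      simp [hg1, hg2, Set.indicator_of_mem, Set.indicator_of_notMem, hx]
  have hbnd : ∀ w : ℝ → ℝ, (∀ x, 0 ≤ w x) → (∀ x, w x ≤ 1) →
      ∀ x, |w x * (ψ x + M)| ≤ 2*M := by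
    intro w h0 h1 x
    rw [abs_mul]
    calc |w x| * |ψ x + M| ≤ 1 * (2*M) :=
          mul_le_mul (abs_le.2 ⟨by linarith [h0 x], h1 x⟩)
            (abs_le.2 ⟨by linarith [hψM x], hψ2M x⟩) (abs_nonneg _) zero_le_one
      _ = 2*M := one_mul _
  -- convergence for g1
  have T1 : Tendsto (fun n => ∫ x, g1 x ∂μ n) atTop (nhds (∫ x, g1 x ∂μlim)) := by
    apply tendsto_integral_of_sandwich μ μlim hweak g1
      (fun n => indicator_bdd_integrable hCm (hψ.measurable.add_const M) hg1b)
      (indicator_bdd_integrable hCm (hψ.measurable.add_const M) hg1b)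
    intro δ hδ
    obtain ⟨u0, v0, hu0c, hv0c, hu00, hu0i, hiv0, hv01, hgap0⟩ :=
      indicator_sandwich μlim hCoc hCb hfr (δ := δ/(2*M+1)) (by positivity)
    have hind1 : ∀ x, C.indicator (1 : ℝ → ℝ) x ≤ 1 := by
      intro x
      by_cases hx : x ∈ C <;>
        simp [Set.indicator_of_mem, Set.indicator_of_notMem, hx, zero_le_one]
    have hind0 : ∀ x, (0:ℝ) ≤ C.indicator (1 : ℝ → ℝ) x := by
      intro x
      by_cases hx : x ∈ C <;>
        simp [Set.indicator_of_mem, Set.indicator_of_notMem, hx, zero_le_one]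
    have hu01 : ∀ x, u0 x ≤ 1 := fun x => (hu0i x).trans (hind1 x)
    have hv00 : ∀ x, 0 ≤ v0 x := fun x => (hind0 x).trans (hiv0 x)
    have hucont : Continuous (fun x => u0 x * (ψ x + M)) := hu0c.mul (hψ.add continuous_const)
    have hvcont : Continuous (fun x => v0 x * (ψ x + M)) := hv0c.mul (hψ.add continuous_const)
    have hub := hbnd u0 hu00 hu01
    have hvb := hbnd v0 hv00 hv01
    refine ⟨fun x => u0 x * (ψ x + M), fun x => v0 x * (ψ x + M), hucont, hvcont,
      ⟨2*M, hub⟩, ⟨2*M, hvb⟩, fun x => ?_, fun x => ?_, ?_⟩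
    · rw [hg1eq x]
      exact mul_le_mul_of_nonneg_right (hu0i x) (hψM x)
    · rw [hg1eq x]
      exact mul_le_mul_of_nonneg_right (hiv0 x) (hψM x)
    · have hpt : ∀ x, v0 x * (ψ x + M) - u0 x * (ψ x + M) ≤ (v0 x - u0 x) * (2*M) := by
        intro x
        have h1 : (0:ℝ) ≤ v0 x - u0 x := by linarith [(hu0i x).trans (hiv0 x)]
        nlinarith [mul_le_mul_of_nonneg_left (hψ2M x) h1]
      have hiu : Integrable (fun x => v0 x * (ψ x + M) - u0 x * (ψ x + M)) μlim :=
        (bdd_cont_integrable hvcont hvb).sub (bdd_cont_integrable hucont hub)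
      have hiv2 : Integrable (fun x => (v0 x - u0 x) * (2*M)) μlim :=
        (bdd_cont_integrable (hv0c.sub hu0c) (K := 1)
          (fun x => abs_le.2 ⟨by simp only [Pi.sub_apply]; linarith [hu01 x, hv00 x], by
            simp only [Pi.sub_apply]; linarith [hv01 x, hu00 x]⟩)).mul_const _
      show ∫ x, ((fun x => v0 x * (ψ x + M)) x - (fun x => u0 x * (ψ x + M)) x) ∂μlim ≤ δ
      simp only []
      calc ∫ x, (v0 x * (ψ x + M) - u0 x * (ψ x + M)) ∂μlim
          ≤ ∫ x, (v0 x - u0 x) * (2*M) ∂μlim := integral_mono hiu hiv2 hpt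
        _ = (∫ x, (v0 x - u0 x) ∂μlim) * (2*M) := integral_mul_const _ _
        _ ≤ (δ/(2*M+1)) * (2*M) := mul_le_mul_of_nonneg_right hgap0 (by linarith)
        _ ≤ δ := by
            rw [div_mul_eq_mul_div, div_le_iff₀ (by linarith)]
            nlinarith
  -- convergence for g2
  have T2 : Tendsto (fun n => ∫ x, g2 x ∂μ n) atTop (nhds (∫ x, g2 x ∂μlim)) := by
    apply tendsto_integral_of_sandwich μ μlim hweak g2
      (fun n => indicator_bdd_integrable hCm measurable_const hg2b)
      (indicator_bdd_integrable hCm measurable_const hg2b)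
    intro δ hδ
    obtain ⟨u0, v0, hu0c, hv0c, hu00, hu0i, hiv0, hv01, hgap0⟩ :=
      indicator_sandwich μlim hCoc hCb hfr hδ
    have hv00 : ∀ x, 0 ≤ v0 x := fun x => le_trans (by
      by_cases hx : x ∈ C <;>
        simp [Set.indicator_of_mem, Set.indicator_of_notMem, hx, zero_le_one]) (hiv0 x)
    have hu01 : ∀ x, u0 x ≤ 1 := fun x => (hu0i x).trans (by
      by_cases hx : x ∈ C <;>
        simp [Set.indicator_of_mem, Set.indicator_of_notMem, hx, zero_le_one])
    exact ⟨u0, v0, hu0c, hv0c, ⟨1, fun x => abs_le.2 ⟨by linarith [hu00 x], hu01 x⟩⟩,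
      ⟨1, fun x => abs_le.2 ⟨by linarith [hv00 x], hv01 x⟩⟩, hu0i, hiv0, hgap0⟩
  -- identify set integrals
  have key : ∀ (ν : Measure ℝ) [IsProbabilityMeasure ν],
      ∫ x in C, ψ x ∂ν = (∫ x, g1 x ∂ν) - M * (∫ x, g2 x ∂ν) := by
    intro ν _
    have hψint : IntegrableOn ψ C ν := (bdd_cont_integrable hψ hM).integrableOn
    have h1 : ∫ x, g1 x ∂ν = ∫ x in C, (ψ x + M) ∂ν := integral_indicator hCm
    have h2 : ∫ x, g2 x ∂ν = (ν C).toReal := integral_indicator_one hCm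
    rw [h1, h2, integral_add hψint (integrableOn_const),
      setIntegral_const]
    simp [smul_eq_mul]
    simp only [Measure.real]
    ring
  have hT := T1.sub (T2.const_mul M)
  have heq : (fun n => ∫ x, g1 x ∂μ n - M * ∫ x, g2 x ∂μ n)
      = fun n => ∫ x in C, ψ x ∂μ n := by
    funext n; rw [key (μ n)]
  rw [heq] at hT
  rwa [key μlim]

lemma eta_arith {M c ε : ℝ} (hM0 : 0 ≤ M) (hc : 0 < c) (hε : 0 < ε) :
    ε/(2*c) + M * (ε/(2*(M+1)*c)) ≤ ε/c := by
  have h1 : M * (ε/(2*(M+1)*c)) ≤ ε/(2*c) := by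
    rw [← mul_div_assoc, div_le_div_iff₀ (by positivity) (by positivity)]
    nlinarith
  have h2 : ε/(2*c) + ε/(2*c) = ε/c := by
    field_simp
    ring
  linarith

lemma card_div_arith {c ε : ℝ} (hc : 0 ≤ c) (hε : 0 < ε) : c * (ε/(c+1)) ≤ ε := by
  rw [← mul_div_assoc, div_le_iff₀ (by positivity)]
  nlinarith

set_option maxHeartbeats 1600000 in
/-- Invariance of the weak* limit of induced measures: with `f_n → f_0`
uniformly on `I`, induced maps `F_n = f_n^{τ_n^i}` on pairwise disjoint subintervals
`C_n^i`, `F_n`-invariant probability measures `μ_n` carried by `∪_i C_n^i` converging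
weak* to `μlim`, uniform tail decay (i), matching of cylinders (ii), and boundary-nullity
for the limit (iii), the limit measure `μlim` is `F_0`-invariant. -/
theorem weakstar_limit_invariant
    (f : ℕ → ℝ → ℝ) (hfc : ∀ n, Continuous (f n)) (hfI : ∀ n, Set.MapsTo (f n) unitI unitI)
    (hfconv : TendstoUniformlyOn (fun n x => f n x) (f 0) atTop unitI)
    (Cd : ℕ → ℕ → Set ℝ) (τ : ℕ → ℕ → ℕ)
    (hCsub : ∀ n i, Cd n i ⊆ unitI ∧ (Cd n i).OrdConnected)
    (hCdisj : ∀ n, Pairwise fun i j => Disjoint (Cd n i) (Cd n j))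
    (hτ : ∀ n i, 1 ≤ τ n i)
    (F : ℕ → ℝ → ℝ) (hFmeas : ∀ n, Measurable (F n))
    (hFdef : ∀ n i, ∀ x ∈ Cd n i, F n x = (f n)^[τ n i] x)
    (μ : ℕ → Measure ℝ) (μlim : Measure ℝ)
    [∀ n, IsProbabilityMeasure (μ n)] [IsProbabilityMeasure μlim]
    (hfull : ∀ n, 1 ≤ n → μ n (⋃ i, Cd n i) = 1)
    (hinv : ∀ n, 1 ≤ n → Measure.map (F n) (μ n) = μ n)
    (hweak : ∀ φ : ℝ → ℝ, Continuous φ →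
      Tendsto (fun n => ∫ x, φ x ∂μ n) atTop (nhds (∫ x, φ x ∂μlim)))
    (htail : ∀ ε > (0 : ℝ), ∃ N : ℕ, ∀ᶠ n in atTop,
      μ n (⋃ i ∈ {i | N < τ n i}, Cd n i) < ENNReal.ofReal ε)
    (hmatch : ∀ i, (∀ᶠ n in atTop, τ n i = τ 0 i) ∧
      Tendsto (fun n => μ n (Cd n i ∆ Cd 0 i)) atTop (nhds 0))
    (hfulllim : μlim (⋃ i, Cd 0 i) = 1)
    (hbd : ∀ i, μlim (frontier (Cd 0 i)) = 0) :
    ∀ φ : ℝ → ℝ, Continuous φ → ∫ x, φ (F 0 x) ∂μlim = ∫ x, φ x ∂μlim := by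
  intro φ hφ
  have hCm : ∀ n i, MeasurableSet (Cd n i) := fun n i => (hCsub n i).2.measurableSet
  obtain ⟨M, hM⟩ : ∃ M, ∀ x ∈ unitI, |φ x| ≤ M := by
    obtain ⟨M, hM⟩ := unitI_compact.exists_bound_of_continuousOn hφ.continuousOn
    exact ⟨M, fun x hx => by simpa using hM x hx⟩
  have hM0 : 0 ≤ M := (abs_nonneg _).trans (hM 0 ⟨le_refl 0, zero_le_one⟩)
  set proj : ℝ → ℝ := fun x => max 0 (min 1 x) with hproj_def
  have hprojc : Continuous proj := continuous_const.max (continuous_const.min continuous_id)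
  have hprojI : ∀ x, proj x ∈ unitI :=
    fun x => ⟨le_max_left _ _, max_le zero_le_one (min_le_left _ _)⟩
  have hprojid : ∀ x ∈ unitI, proj x = x := fun x hx => by
    show max 0 (min 1 x) = x
    rw [min_eq_right hx.2, max_eq_right hx.1]
  set ψ : ℕ → ℝ → ℝ := fun i x => φ ((f 0)^[τ 0 i] (proj x)) with hψ_def
  have hψc : ∀ i, Continuous (ψ i) := fun i => hφ.comp (((hfc 0).iterate _).comp hprojc)
  have hψb : ∀ i x, |ψ i x| ≤ M := fun i x => hM _ (iter_mapsTo (hfI 0) _ (hprojI x))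
  have hψeq : ∀ i, ∀ x ∈ unitI, ψ i x = φ ((f 0)^[τ 0 i] x) := fun i x hx => by
    show φ ((f 0)^[τ 0 i] (proj x)) = φ ((f 0)^[τ 0 i] x)
    rw [hprojid x hx]
  -- per-cylinder limits
  have hTi : ∀ i, Tendsto (fun n => ∫ x in Cd 0 i, ψ i x ∂μ n) atTop
      (nhds (∫ x in Cd 0 i, ψ i x ∂μlim)) := fun i =>
    tendsto_setIntegral_cyl μ μlim hweak (hCsub 0 i).2 (hCsub 0 i).1 (hbd i)
      (hψc i) (hψb i)
  have hTmeas : ∀ i, Tendsto (fun n => (μ n (Cd 0 i)).toReal) atTop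
      (nhds ((μlim (Cd 0 i)).toReal)) := by
    intro i
    have h := tendsto_setIntegral_cyl μ μlim hweak (hCsub 0 i).2 (hCsub 0 i).1 (hbd i)
      (continuous_const : Continuous fun _ : ℝ => (1:ℝ)) (M := 1) (fun x => by norm_num)
    simpa [setIntegral_const, Measure.real] using h
  have hTmatch : ∀ i, Tendsto (fun n => (μ n (Cd n i ∆ Cd 0 i)).toReal) atTop (nhds 0) := by
    intro i
    have := (ENNReal.tendsto_toReal (a := 0) (by simp)).comp (hmatch i).2
    simpa [Function.comp_def] using this
  have hTn : ∀ i, Tendsto (fun n => (μ n (Cd n i)).toReal) atTop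
      (nhds ((μlim (Cd 0 i)).toReal)) := by
    intro i
    have hdiff : Tendsto (fun n => (μ n (Cd n i)).toReal - (μ n (Cd 0 i)).toReal)
        atTop (nhds 0) :=
      squeeze_zero_norm (fun n => by
        rw [Real.norm_eq_abs]; exact meas_toReal_diff_le) (hTmatch i)
    have := hdiff.add (hTmeas i)
    simpa using this
  -- integrability of φ ∘ F 0 w.r.t. μlim
  have hUmeas : MeasurableSet (⋃ i, Cd 0 i) := MeasurableSet.iUnion (hCm 0)
  have haeF0 : ∀ᵐ x ∂μlim, x ∈ ⋃ i, Cd 0 i := by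
    rw [ae_iff]
    have h : μlim ((⋃ i, Cd 0 i)ᶜ) = 0 := by
      rw [measure_compl hUmeas (measure_ne_top _ _), hfulllim, measure_univ, tsub_self]
    simpa [Set.compl_def] using h
  have hboundF0 : ∀ᵐ x ∂μlim, |φ (F 0 x)| ≤ M := by
    filter_upwards [haeF0] with x hx
    obtain ⟨i, hi⟩ := Set.mem_iUnion.1 hx
    rw [hFdef 0 i x hi]
    exact hM _ (iter_mapsTo (hfI 0) _ ((hCsub 0 i).1 hi))
  have hintF0 : Integrable (fun x => φ (F 0 x)) μlim :=
    (integrable_const M).mono' ((hφ.measurable.comp (hFmeas 0)).aestronglyMeasurable)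
      (by simpa using hboundF0)
  -- integrability of φ ∘ F n w.r.t. μ n for n ≥ 1
  have hboundFn : ∀ n, 1 ≤ n → ∀ᵐ x ∂μ n, |φ (F n x)| ≤ M := by
    intro n hn
    have haeFn : ∀ᵐ x ∂μ n, x ∈ ⋃ i, Cd n i := by
      rw [ae_iff]
      have h : μ n ((⋃ i, Cd n i)ᶜ) = 0 := by
        rw [measure_compl (MeasurableSet.iUnion (hCm n)) (measure_ne_top _ _), hfull n hn,
          measure_univ, tsub_self]
      simpa [Set.compl_def] using h
    filter_upwards [haeFn] with x hx
    obtain ⟨i, hi⟩ := Set.mem_iUnion.1 hx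
    rw [hFdef n i x hi]
    exact hM _ (iter_mapsTo (hfI n) _ ((hCsub n i).1 hi))
  have hintFn : ∀ n, 1 ≤ n → Integrable (fun x => φ (F n x)) (μ n) := fun n hn =>
    (integrable_const M).mono' ((hφ.measurable.comp (hFmeas n)).aestronglyMeasurable)
      (by simpa using hboundFn n hn)
  -- the key reduction
  set T := ∫ x, φ (F 0 x) ∂μlim with hT_def
  set L := ∫ x, φ x ∂μlim with hL_def
  suffices h : ∀ ε > (0:ℝ), |T - L| ≤ (3*M+3) * ε by
    have h0 : |T - L| ≤ 0 := by
      by_contra h0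
      push_neg at h0
      have h1 := h (|T - L| / (2*(3*M+3))) (by positivity)
      have h2 : (3*M+3) * (|T - L| / (2*(3*M+3))) = |T - L| / 2 := by
        field_simp
      rw [h2] at h1
      linarith
    have := abs_nonneg (T - L)
    have : |T - L| = 0 := le_antisymm h0 this
    rw [abs_eq_zero, sub_eq_zero] at this
    exact this
  intro ε hε
  -- choose a finite set of cylinders carrying most of the limit mass
  have hsum1 : ∑' i, μlim (Cd 0 i) = 1 := by
    rw [← measure_iUnion (hCdisj 0) (hCm 0)]; exact hfulllim
  set p : ℕ → ℝ := fun i => (μlim (Cd 0 i)).toReal with hp_def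
  have hpsummable : Summable p :=
    ENNReal.summable_toReal (by rw [hsum1]; exact ENNReal.one_ne_top)
  have hptsum : ∑' i, p i = 1 := by
    have h := ENNReal.tsum_toReal_eq (f := fun i => μlim (Cd 0 i))
      (fun i => measure_ne_top _ _)
    rw [hsum1] at h
    simpa using h.symm
  have hphs : HasSum p 1 := hptsum ▸ hpsummable.hasSum
  obtain ⟨S, hS⟩ : ∃ S : Finset ℕ, 1 - ε < ∑ i ∈ S, p i := by
    have h : ∀ᶠ s : Finset ℕ in atTop, 1 - ε < ∑ i ∈ s, p i :=
      hphs.eventually (eventually_gt_nhds (by linarith))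
    exact h.exists
  have hSle : ∑ i ∈ S, p i ≤ 1 :=
    hptsum ▸ Summable.sum_le_tsum S (fun i _ => ENNReal.toReal_nonneg) hpsummable
  set s0 := ∑ i ∈ S, p i with hs0_def
  set U0 : Set ℝ := ⋃ i ∈ S, Cd 0 i with hU0_def
  have hU0m : MeasurableSet U0 := S.measurableSet_biUnion (fun i _ => hCm 0 i)
  have hU0meas : (μlim U0).toReal = s0 := by
    rw [hU0_def, measure_biUnion_finset (fun i _ j _ hij => hCdisj 0 hij)
      (fun i _ => hCm 0 i)]
    exact ENNReal.toReal_sum (fun i _ => measure_ne_top _ _)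
  have hU0c : (μlim U0ᶜ).toReal = 1 - s0 := by
    rw [measure_compl hU0m (measure_ne_top _ _), measure_univ,
      ENNReal.toReal_sub_of_le prob_le_one ENNReal.one_ne_top, ENNReal.toReal_one, hU0meas]
  -- F1 : replacing T by the finite sum of cylinder integrals
  have hLieq : ∀ i ∈ S, ∫ x in Cd 0 i, φ (F 0 x) ∂μlim = ∫ x in Cd 0 i, ψ i x ∂μlim := by
    intro i _
    apply setIntegral_congr_fun (hCm 0 i)
    intro x hx
    show φ (F 0 x) = ψ i x
    rw [hFdef 0 i x hx]
    exact (hψeq i x ((hCsub 0 i).1 hx)).symm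
  have hF1 : |T - ∑ i ∈ S, ∫ x in Cd 0 i, ψ i x ∂μlim| ≤ M * ε := by
    have hsplit : T = ∫ x in U0, φ (F 0 x) ∂μlim + ∫ x in U0ᶜ, φ (F 0 x) ∂μlim :=
      (integral_add_compl hU0m hintF0).symm
    have hsum : ∫ x in U0, φ (F 0 x) ∂μlim = ∑ i ∈ S, ∫ x in Cd 0 i, φ (F 0 x) ∂μlim :=
      integral_biUnion_finset S (fun i _ => hCm 0 i)
        (fun i _ j _ hij => hCdisj 0 hij) (fun i _ => hintF0.integrableOn)
    have hcong : ∑ i ∈ S, ∫ x in Cd 0 i, φ (F 0 x) ∂μlim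
        = ∑ i ∈ S, ∫ x in Cd 0 i, ψ i x ∂μlim := Finset.sum_congr rfl hLieq
    have heq : T - ∑ i ∈ S, ∫ x in Cd 0 i, ψ i x ∂μlim
        = ∫ x in U0ᶜ, φ (F 0 x) ∂μlim := by
      rw [hsplit, hsum, hcong]; ring
    rw [heq]
    have hrem : |∫ x in U0ᶜ, φ (F 0 x) ∂μlim| ≤ M * (μlim U0ᶜ).toReal := by
      rw [← Real.norm_eq_abs]
      exact norm_setIntegral_le_of_norm_le_const_ae' (measure_lt_top _ _)
        (hboundF0.mono fun x hx _ => by rw [Real.norm_eq_abs]; exact hx)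
    have hrem2 : (μlim U0ᶜ).toReal ≤ ε := by rw [hU0c]; linarith
    calc |∫ x in U0ᶜ, φ (F 0 x) ∂μlim| ≤ M * (μlim U0ᶜ).toReal := hrem
      _ ≤ M * ε := mul_le_mul_of_nonneg_left hrem2 hM0
  -- eventual facts
  have hc1 : (0:ℝ) < (S.card:ℝ) + 1 := by positivity
  have ev1 : ∀ᶠ n in atTop, |(∫ x, φ x ∂μ n) - L| < ε := by
    have h := Metric.tendsto_nhds.mp (hweak φ hφ) ε hε
    simpa [Real.dist_eq] using h
  have ev2 : ∀ᶠ n in atTop, |(∑ i ∈ S, (μ n (Cd n i)).toReal) - s0| < ε := by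
    have hr : Tendsto (fun n => ∑ i ∈ S, (μ n (Cd n i)).toReal) atTop (nhds s0) := by
      rw [hs0_def]
      exact tendsto_finset_sum S (fun i _ => hTn i)
    have h := Metric.tendsto_nhds.mp hr ε hε
    simpa [Real.dist_eq] using h
  have ev3 : ∀ᶠ n in atTop, |(∑ i ∈ S, ∫ x in Cd 0 i, ψ i x ∂μ n)
      - ∑ i ∈ S, ∫ x in Cd 0 i, ψ i x ∂μlim| < ε := by
    have hr : Tendsto (fun n => ∑ i ∈ S, ∫ x in Cd 0 i, ψ i x ∂μ n) atTop
        (nhds (∑ i ∈ S, ∫ x in Cd 0 i, ψ i x ∂μlim)) :=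
      tendsto_finset_sum S (fun i _ => hTi i)
    have h := Metric.tendsto_nhds.mp hr ε hε
    simpa [Real.dist_eq] using h
  have ev4 : ∀ᶠ n in atTop, ∀ i ∈ S,
      |∫ x in Cd n i, φ (F n x) ∂μ n - ∫ x in Cd 0 i, ψ i x ∂μ n| ≤ ε/((S.card:ℝ)+1) := by
    rw [eventually_all_finset]
    intro i hiS
    set η : ℝ := ε/(2*((S.card:ℝ)+1)) with hη_def
    have hηpos : 0 < η := by positivity
    set η2 : ℝ := ε/(2*(M+1)*((S.card:ℝ)+1)) with hη2_def
    have hη2pos : 0 < η2 := by positivity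
    have e2 := phi_iter_unif f hfc hfI hfconv (τ 0 i) hφ hηpos
    have e3 : ∀ᶠ n in atTop, (μ n (Cd n i ∆ Cd 0 i)).toReal < η2 :=
      (hTmatch i).eventually (eventually_lt_nhds hη2pos)
    filter_upwards [(hmatch i).1, e2, e3] with n hn1 hn2 hn3
    have hstep1 : ∫ x in Cd n i, φ (F n x) ∂μ n
        = ∫ x in Cd n i, φ ((f n)^[τ 0 i] x) ∂μ n :=
      setIntegral_congr_fun (hCm n i) (fun x hx => by rw [hFdef n i x hx, hn1])
    have hcont : Continuous fun x => φ ((f n)^[τ 0 i] x) := hφ.comp ((hfc n).iterate _)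
    have hconti : IntegrableOn (fun x => φ ((f n)^[τ 0 i] x)) (Cd n i) (μ n) := by
      apply Integrable.mono' (integrable_const M) hcont.aestronglyMeasurable.restrict
      apply ae_restrict_of_forall_mem (hCm n i)
      intro x hx
      rw [Real.norm_eq_abs]
      exact hM _ (iter_mapsTo (hfI n) _ ((hCsub n i).1 hx))
    have hψint : IntegrableOn (ψ i) (Cd n i) (μ n) :=
      ((integrable_const M).mono' (hψc i).aestronglyMeasurable
        (ae_of_all _ (by simpa using hψb i))).integrableOn
    have hstep2 : |∫ x in Cd n i, φ ((f n)^[τ 0 i] x) ∂μ n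
        - ∫ x in Cd n i, ψ i x ∂μ n| ≤ η := by
      rw [← integral_sub hconti hψint, ← Real.norm_eq_abs]
      calc ‖∫ x in Cd n i, (φ ((f n)^[τ 0 i] x) - ψ i x) ∂μ n‖
          ≤ η * (μ n (Cd n i)).toReal := by
            apply norm_setIntegral_le_of_norm_le_const (measure_lt_top _ _)
            intro x hx
            rw [Real.norm_eq_abs, hψeq i x ((hCsub n i).1 hx)]
            exact hn2 x ((hCsub n i).1 hx)
        _ ≤ η * 1 := mul_le_mul_of_nonneg_left (by
            rw [← ENNReal.toReal_one]
            exact ENNReal.toReal_mono (by simp) prob_le_one) hηpos.le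
        _ = η := mul_one _
    have hstep3 : |∫ x in Cd n i, ψ i x ∂μ n - ∫ x in Cd 0 i, ψ i x ∂μ n| ≤ M * η2 := by
      calc |∫ x in Cd n i, ψ i x ∂μ n - ∫ x in Cd 0 i, ψ i x ∂μ n|
          ≤ M * (μ n (Cd n i ∆ Cd 0 i)).toReal :=
            setIntegral_symmdiff_bound (hCm n i) (hCm 0 i) (hψc i) (hψb i)
        _ ≤ M * η2 := mul_le_mul_of_nonneg_left hn3.le hM0
    have hnum : η + M * η2 ≤ ε/((S.card:ℝ)+1) := by
      rw [hη_def, hη2_def]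
      exact eta_arith hM0 hc1 hε
    calc |∫ x in Cd n i, φ (F n x) ∂μ n - ∫ x in Cd 0 i, ψ i x ∂μ n|
        = |(∫ x in Cd n i, φ ((f n)^[τ 0 i] x) ∂μ n - ∫ x in Cd n i, ψ i x ∂μ n)
          + (∫ x in Cd n i, ψ i x ∂μ n - ∫ x in Cd 0 i, ψ i x ∂μ n)| := by
          rw [hstep1]; ring_nf
      _ ≤ |∫ x in Cd n i, φ ((f n)^[τ 0 i] x) ∂μ n - ∫ x in Cd n i, ψ i x ∂μ n|
          + |∫ x in Cd n i, ψ i x ∂μ n - ∫ x in Cd 0 i, ψ i x ∂μ n| := abs_add_le _ _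
      _ ≤ η + M * η2 := add_le_add hstep2 hstep3
      _ ≤ ε/((S.card:ℝ)+1) := hnum
  -- pick a single n realizing all eventual facts
  obtain ⟨n, hn⟩ := ((eventually_ge_atTop 1).and (ev1.and (ev2.and (ev3.and ev4)))).exists
  obtain ⟨hn1, hnev1, hnev2, hnev3, hnev4⟩ := hn
  -- decompose the integral for this n
  set Un : Set ℝ := ⋃ i ∈ S, Cd n i with hUn_def
  have hUnm : MeasurableSet Un := S.measurableSet_biUnion (fun i _ => hCm n i)
  have hA1 : ∫ x, φ x ∂μ n = ∫ x, φ (F n x) ∂μ n := by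
    conv_lhs => rw [← hinv n hn1]
    exact integral_map (hFmeas n).aemeasurable hφ.aestronglyMeasurable
  have hA2 : ∫ x, φ (F n x) ∂μ n
      = (∑ i ∈ S, ∫ x in Cd n i, φ (F n x) ∂μ n) + ∫ x in Unᶜ, φ (F n x) ∂μ n := by
    rw [← integral_biUnion_finset S (fun i _ => hCm n i)
      (fun i _ j _ hij => hCdisj n hij) (fun i _ => (hintFn n hn1).integrableOn)]
    exact (integral_add_compl hUnm (hintFn n hn1)).symm
  have hUnmeas : (μ n Un).toReal = ∑ i ∈ S, (μ n (Cd n i)).toReal := by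
    rw [hUn_def, measure_biUnion_finset (fun i _ j _ hij => hCdisj n hij)
      (fun i _ => hCm n i)]
    exact ENNReal.toReal_sum (fun i _ => measure_ne_top _ _)
  have hUnc : (μ n Unᶜ).toReal = 1 - ∑ i ∈ S, (μ n (Cd n i)).toReal := by
    rw [measure_compl hUnm (measure_ne_top _ _), measure_univ,
      ENNReal.toReal_sub_of_le prob_le_one ENNReal.one_ne_top, ENNReal.toReal_one, hUnmeas]
  have hA3 : |∫ x in Unᶜ, φ (F n x) ∂μ n| ≤ M * (2*ε) := by
    have hb : |∫ x in Unᶜ, φ (F n x) ∂μ n| ≤ M * (μ n Unᶜ).toReal := by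
      rw [← Real.norm_eq_abs]
      exact norm_setIntegral_le_of_norm_le_const_ae' (measure_lt_top _ _)
        ((hboundFn n hn1).mono fun x hx _ => by rw [Real.norm_eq_abs]; exact hx)
    have hb2 : (μ n Unᶜ).toReal ≤ 2*ε := by
      rw [hUnc]
      have h := abs_lt.1 hnev2
      linarith [h.1, hS]
    calc |∫ x in Unᶜ, φ (F n x) ∂μ n| ≤ M * (μ n Unᶜ).toReal := hb
      _ ≤ M * (2*ε) := mul_le_mul_of_nonneg_left hb2 hM0
  have hA4 : |(∑ i ∈ S, ∫ x in Cd n i, φ (F n x) ∂μ n)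
      - ∑ i ∈ S, ∫ x in Cd 0 i, ψ i x ∂μ n| ≤ ε := by
    rw [← Finset.sum_sub_distrib]
    calc |∑ i ∈ S, (∫ x in Cd n i, φ (F n x) ∂μ n - ∫ x in Cd 0 i, ψ i x ∂μ n)|
        ≤ ∑ i ∈ S, |∫ x in Cd n i, φ (F n x) ∂μ n - ∫ x in Cd 0 i, ψ i x ∂μ n| :=
          Finset.abs_sum_le_sum_abs _ _
      _ ≤ ∑ i ∈ S, ε/((S.card:ℝ)+1) := Finset.sum_le_sum (fun i hi => hnev4 i hi)
      _ = (S.card:ℝ) * (ε/((S.card:ℝ)+1)) := by rw [Finset.sum_const, nsmul_eq_mul]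
      _ ≤ ε := card_div_arith (Nat.cast_nonneg _) hε
  -- assemble the chain of estimates
  set SL := ∑ i ∈ S, ∫ x in Cd 0 i, ψ i x ∂μlim with hSL_def
  set B := ∑ i ∈ S, ∫ x in Cd 0 i, ψ i x ∂μ n with hB_def
  set A := ∑ i ∈ S, ∫ x in Cd n i, φ (F n x) ∂μ n with hA_def
  set I := ∫ x, φ (F n x) ∂μ n with hI_def
  have d1 : |T - SL| ≤ M * ε := hF1
  have d2 : |SL - B| ≤ ε := by
    rw [abs_sub_comm]
    exact hnev3.le
  have d3 : |B - A| ≤ ε := by rw [abs_sub_comm]; exact hA4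
  have d4 : |A - I| ≤ M * (2*ε) := by
    have : A - I = -(∫ x in Unᶜ, φ (F n x) ∂μ n) := by rw [hA2]; ring
    rw [this, abs_neg]
    exact hA3
  have d5 : |I - L| ≤ ε := by
    rw [← hA1]
    exact hnev1.le
  have t1 := abs_sub_le T SL B
  have t2 := abs_sub_le T B A
  have t3 := abs_sub_le T A I
  have t4 := abs_sub_le T I L
  nlinarith [t1, t2, t3, t4, d1, d2, d3, d4, d5]


end
end

section
/- Let I = [0,1]. For each n ≥ 0 let f_n : I → I be continuous, with sup_{x∈I} |f_n(x) − f_0(x)| → 0 as n → ∞. For each n ≥ 0 let (C_n^i)_{i∈ℕ} be pairwise disjoint subintervals of I and τ_n^i ≥ 1 integers. For each n ≥ 0 let μ_n be a Borel probability measure on I with μ_n(∪_i C_n^i) = 1, and suppose μ_n → μ_0 in the weak* topology. Assume: (i) for every ε > 0 there exists N ∈ ℕ such that Σ_{i : τ_n^i > N} τ_n^i μ_n(C_n^i) < ε both for n = 0 and for all sufficiently large n; (ii) for each i ∈ ℕ, τ_n^i = τ_0^i for all sufficiently large n, and μ_n(C_n^i △ C_0^i) → 0 as n → ∞; (iii)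 μ_0(∂C_0^i) = 0 for every i. Define, for each n ≥ 0, the finite Borel measure μ*_n := Σ_{i} Σ_{k=0}^{τ_n^i − 1} (f_n^k)_*(μ_n|_{C_n^i}). Then for every continuous g : I → ℝ, ∫ g dμ*_n → ∫ g dμ*_0 as n → ∞. -/
open Set MeasureTheory Filter Topology
open scoped ENNReal symmDiff

set_option maxHeartbeats 1600000

noncomputable section

/-- The (unnormalised) projection `μ* = Σ_i Σ_{k=0}^{τ_i−1} (f^k)_*(μ|_{C_i})` of a
measure `μ` on the base of an inducing scheme with branch domains `Cd i` and inducing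
times `τ i`. -/
def projMeasure (f : ℝ → ℝ) (Cd : ℕ → Set ℝ) (τ : ℕ → ℕ) (μ : Measure ℝ) : Measure ℝ :=
  Measure.sum fun i : ℕ =>
    Measure.sum fun k : Fin (τ i) => Measure.map f^[(k : ℕ)] (μ.restrict (Cd i))

/-- Integrability of a globally bounded continuous function w.r.t. a finite measure. -/
lemma integrable_of_bdd {ν : Measure ℝ} (hν : ν Set.univ ≠ ∞) {u : ℝ → ℝ} (hu : Continuous u)
    {B : ℝ} (hB : ∀ x, |u x| ≤ B) : Integrable u ν := by
  have : IsFiniteMeasure ν := ⟨hν.lt_top⟩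
  exact (integrable_const B).mono' hu.aestronglyMeasurable
    (Eventually.of_forall fun x => by simpa [Real.norm_eq_abs] using hB x)

/-- Uniform convergence of iterates on the unit interval. -/
lemma iter_tendstoUniformlyOn {f : ℕ → ℝ → ℝ}
    (hfI : ∀ n, Set.MapsTo (f n) unitI unitI) (hfc0 : Continuous (f 0))
    (hfconv : TendstoUniformlyOn (fun n x => f n x) (f 0) atTop unitI) (k : ℕ) :
    TendstoUniformlyOn (fun n x => (f n)^[k] x) (f 0)^[k] atTop unitI := by
  induction k with
  | zero =>
    rw [Metric.tendstoUniformlyOn_iff]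
    intro ε hε
    filter_upwards with n x _
    simpa using hε
  | succ k ih =>
    rw [Metric.tendstoUniformlyOn_iff]
    intro ε hε
    have hu : UniformContinuousOn (f 0) unitI :=
      isCompact_Icc.uniformContinuousOn_of_continuous hfc0.continuousOn
    obtain ⟨δ, hδ, hδ'⟩ := Metric.uniformContinuousOn_iff.1 hu (ε / 2) (half_pos hε)
    have h1 := (Metric.tendstoUniformlyOn_iff.1 ih) δ hδ
    have h2 := (Metric.tendstoUniformlyOn_iff.1 hfconv) (ε / 2) (half_pos hε)
    filter_upwards [h1, h2] with n hn1 hn2 x hx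
    have hxI : (f 0)^[k] x ∈ unitI := (hfI 0).iterate k hx
    have hxI' : (f n)^[k] x ∈ unitI := (hfI n).iterate k hx
    rw [Function.iterate_succ_apply', Function.iterate_succ_apply']
    calc dist ((f 0) ((f 0)^[k] x)) ((f n) ((f n)^[k] x))
        ≤ dist ((f 0) ((f 0)^[k] x)) ((f 0) ((f n)^[k] x))
            + dist ((f 0) ((f n)^[k] x)) ((f n) ((f n)^[k] x)) := dist_triangle _ _ _
      _ < ε / 2 + ε / 2 := add_lt_add (hδ' _ hxI _ hxI' (hn1 x hx)) (hn2 _ hxI')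
      _ = ε := add_halves ε

/-- Portmanteau-type lemma: weak convergence against continuous test functions implies
convergence of integrals of a bounded continuous function over a fixed set whose boundary
is null for the limit measure. -/
lemma setIntegral_weak_tendsto
    (μ : ℕ → Measure ℝ) [∀ n, IsProbabilityMeasure (μ n)]
    (hweak : ∀ φ : ℝ → ℝ, Continuous φ →
      Tendsto (fun n => ∫ x, φ x ∂μ n) atTop (nhds (∫ x, φ x ∂μ 0)))
    {C : Set ℝ} (hC : MeasurableSet C) (hbd : μ 0 (frontier C) = 0)
    {h : ℝ → ℝ} (hh : Continuous h) {M : ℝ} (hM : ∀ x, |h x| ≤ M) :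
    Tendsto (fun n => ∫ x in C, h x ∂μ n) atTop (nhds (∫ x in C, h x ∂μ 0)) := by
  have hM0 : 0 ≤ M := (abs_nonneg _).trans (hM 0)
  rw [Metric.tendsto_nhds]
  intro ε hε
  set δ : ℝ := ε / (6 * M + 6) with hδdef
  have hδ : 0 < δ := div_pos hε (by linarith)
  have hδ0 : (ENNReal.ofReal δ) ≠ 0 := by
    simp [ENNReal.ofReal_eq_zero, not_le, hδ]
  -- closed set inside the interior, open set around the closure
  obtain ⟨K, hKsub, hKcl, hKμ⟩ :=
    (isOpen_interior (s := C)).measurableSet.exists_isClosed_lt_add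
      (measure_ne_top (μ 0) _) hδ0
  obtain ⟨U, hUsub, hUop, hUμ⟩ :=
    (closure C).exists_isOpen_lt_add (μ := μ 0) (measure_ne_top (μ 0) _) hδ0
  -- Urysohn functions
  obtain ⟨χm, hχm0', hχm1', hχmI⟩ :=
    exists_continuous_zero_one_of_isClosed
      (isOpen_interior (s := C)).isClosed_compl hKcl
      ((disjoint_compl_left (a := interior C)).mono_right hKsub)
  obtain ⟨χp, hχp0', hχp1', hχpI⟩ :=
    exists_continuous_zero_one_of_isClosed hUop.isClosed_compl isClosed_closure
      ((disjoint_compl_left (a := U)).mono_right hUsub)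
  have hχm0 : ∀ x ∉ interior C, χm x = 0 := fun x hx => by simpa using hχm0' hx
  have hχm1 : ∀ x ∈ K, χm x = 1 := fun x hx => by simpa using hχm1' hx
  have hχp0 : ∀ x ∉ U, χp x = 0 := fun x hx => by simpa using hχp0' hx
  have hχp1 : ∀ x ∈ closure C, χp x = 1 := fun x hx => by simpa using hχp1' hx
  -- pointwise facts
  have hχm_le_ind : ∀ x, χm x ≤ C.indicator (fun _ => (1 : ℝ)) x := by
    intro x
    by_cases hx : x ∈ interior C
    · rw [Set.indicator_of_mem (interior_subset hx)]
      exact (hχmI x).2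
    · rw [hχm0 x hx]
      exact Set.indicator_nonneg (fun _ _ => zero_le_one) x
  have hind_le_χp : ∀ x, C.indicator (fun _ => (1 : ℝ)) x ≤ χp x := by
    intro x
    by_cases hx : x ∈ C
    · rw [Set.indicator_of_mem hx, hχp1 x (subset_closure hx)]
    · rw [Set.indicator_of_notMem hx]
      exact (hχpI x).1
  set ψ : ℝ → ℝ := fun x => χp x - χm x with hψdef
  have hψc : Continuous ψ := χp.continuous.sub χm.continuous
  have hψ0 : ∀ x, 0 ≤ ψ x := fun x => by
    have := (hχm_le_ind x).trans (hind_le_χp x); simp only [hψdef]; linarith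
  -- key pointwise bound
  have key : ∀ x, ‖C.indicator h x - h x * χm x‖ ≤ M * ψ x := by
    intro x
    have hind : C.indicator h x = h x * C.indicator (fun _ => (1 : ℝ)) x := by
      by_cases hx : x ∈ C <;> simp [Set.indicator_of_mem, Set.indicator_of_notMem, hx]
    rw [hind, ← mul_sub, Real.norm_eq_abs, abs_mul]
    have h1 : |C.indicator (fun _ => (1 : ℝ)) x - χm x|
        = C.indicator (fun _ => (1 : ℝ)) x - χm x :=
      abs_of_nonneg (by linarith [hχm_le_ind x])
    rw [h1]
    have h2 : C.indicator (fun _ => (1 : ℝ)) x - χm x ≤ ψ x := by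
      simp only [hψdef]; linarith [hind_le_χp x]
    exact mul_le_mul (hM x) h2 (by linarith [hχm_le_ind x]) hM0
  -- integrability
  have hInd : ∀ n, Integrable (C.indicator h) (μ n) := fun n =>
    (integrable_of_bdd (measure_ne_top _ _) hh hM).indicator hC
  have hχmb : ∀ x, |h x * χm x| ≤ M := by
    intro x
    rw [abs_mul]
    calc |h x| * |χm x| ≤ M * 1 := by
          refine mul_le_mul (hM x) ?_ (abs_nonneg _) hM0
          rw [abs_of_nonneg (hχmI x).1]; exact (hχmI x).2
      _ = M := mul_one M
  have hHχ : ∀ n, Integrable (fun x => h x * χm x) (μ n) := fun n =>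
    integrable_of_bdd (measure_ne_top _ _) (hh.mul χm.continuous) hχmb
  have hψb : ∀ x, |ψ x| ≤ 1 := by
    intro x
    rw [abs_of_nonneg (hψ0 x)]
    simp only [hψdef]
    linarith [(hχpI x).2, (hχmI x).1]
  have hψint : ∀ n, Integrable ψ (μ n) := fun n =>
    integrable_of_bdd (measure_ne_top _ _) hψc hψb
  -- bound 1 : for every n
  have bound1 : ∀ n, |(∫ x in C, h x ∂μ n) - ∫ x, h x * χm x ∂μ n| ≤ M * ∫ x, ψ x ∂μ n := by
    intro n
    rw [← integral_indicator hC, ← integral_sub (hInd n) (hHχ n)]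
    have := norm_integral_le_of_norm_le ((hψint n).const_mul M)
      (Eventually.of_forall (fun x => key x)) (f := fun x => C.indicator h x - h x * χm x)
      (μ := μ n)
    rwa [integral_const_mul, Real.norm_eq_abs] at this
  -- bound 2 : ∫ ψ dμ0 ≤ 2δ
  have hUK : μ 0 U ≤ μ 0 K + (ENNReal.ofReal δ + ENNReal.ofReal δ) := by
    have hfr : μ 0 (closure C) ≤ μ 0 (interior C) := by
      have hsub : closure C ⊆ interior C ∪ frontier C := by
        intro x hx
        by_cases h' : x ∈ interior C
        · exact Or.inl h'
        · exact Or.inr ⟨hx, h'⟩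
      calc μ 0 (closure C) ≤ μ 0 (interior C ∪ frontier C) := measure_mono hsub
        _ ≤ μ 0 (interior C) + μ 0 (frontier C) := measure_union_le _ _
        _ = μ 0 (interior C) := by rw [hbd, add_zero]
    calc μ 0 U ≤ μ 0 (closure C) + ENNReal.ofReal δ := hUμ.le
      _ ≤ μ 0 (interior C) + ENNReal.ofReal δ := by gcongr
      _ ≤ (μ 0 K + ENNReal.ofReal δ) + ENNReal.ofReal δ := add_le_add hKμ.le le_rfl
      _ = μ 0 K + (ENNReal.ofReal δ + ENNReal.ofReal δ) := by ring
  have bound2 : ∫ x, ψ x ∂μ 0 ≤ 2 * δ := by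
    have hp : ∫ x, χp x ∂μ 0 ≤ (μ 0 U).toReal := by
      have hle : ∀ x, χp x ≤ U.indicator (fun _ => (1 : ℝ)) x := by
        intro x
        by_cases hx : x ∈ U
        · rw [Set.indicator_of_mem hx]; exact (hχpI x).2
        · rw [Set.indicator_of_notMem hx, hχp0 x hx]
      calc ∫ x, χp x ∂μ 0 ≤ ∫ x, U.indicator (fun _ => (1 : ℝ)) x ∂μ 0 :=
            integral_mono (integrable_of_bdd (measure_ne_top _ _) χp.continuous
              (fun x => by rw [abs_of_nonneg (hχpI x).1]; exact (hχpI x).2))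
              ((integrable_const (1 : ℝ)).indicator hUop.measurableSet) hle
        _ = (μ 0 U).toReal := by
            rw [integral_indicator_const (1 : ℝ) hUop.measurableSet, smul_eq_mul, mul_one, measureReal_def]
    have hm' : (μ 0 K).toReal ≤ ∫ x, χm x ∂μ 0 := by
      have hle : ∀ x, K.indicator (fun _ => (1 : ℝ)) x ≤ χm x := by
        intro x
        by_cases hx : x ∈ K
        · rw [Set.indicator_of_mem hx, hχm1 x hx]
        · rw [Set.indicator_of_notMem hx]; exact (hχmI x).1
      calc (μ 0 K).toReal = ∫ x, K.indicator (fun _ => (1 : ℝ)) x ∂μ 0 := by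
            rw [integral_indicator_const (1 : ℝ) hKcl.measurableSet, smul_eq_mul, mul_one, measureReal_def]
        _ ≤ ∫ x, χm x ∂μ 0 := integral_mono
            ((integrable_const (1 : ℝ)).indicator hKcl.measurableSet)
            (integrable_of_bdd (measure_ne_top _ _) χm.continuous
              (fun x => by rw [abs_of_nonneg (hχmI x).1]; exact (hχmI x).2)) hle
    have hUKr : (μ 0 U).toReal ≤ (μ 0 K).toReal + 2 * δ := by
      have h1 : (μ 0 K + (ENNReal.ofReal δ + ENNReal.ofReal δ)).toReal
          = (μ 0 K).toReal + 2 * δ := by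
        rw [ENNReal.toReal_add (measure_ne_top _ _) (by finiteness),
          ENNReal.toReal_add (by finiteness) (by finiteness),
          ENNReal.toReal_ofReal hδ.le]
        ring
      calc (μ 0 U).toReal ≤ (μ 0 K + (ENNReal.ofReal δ + ENNReal.ofReal δ)).toReal :=
            ENNReal.toReal_mono (by finiteness) hUK
        _ = (μ 0 K).toReal + 2 * δ := h1
    have : ∫ x, ψ x ∂μ 0 = (∫ x, χp x ∂μ 0) - ∫ x, χm x ∂μ 0 := by
      simp only [hψdef]
      exact integral_sub
        (integrable_of_bdd (measure_ne_top _ _) χp.continuous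
          (fun x => by rw [abs_of_nonneg (hχpI x).1]; exact (hχpI x).2))
        (integrable_of_bdd (measure_ne_top _ _) χm.continuous
          (fun x => by rw [abs_of_nonneg (hχmI x).1]; exact (hχmI x).2))
    rw [this]
    linarith
  -- eventual bounds
  have Epsi : ∀ᶠ n in atTop, ∫ x, ψ x ∂μ n < 3 * δ :=
    (hweak ψ hψc).eventually (eventually_lt_nhds (by linarith))
  have Emid : ∀ᶠ n in atTop, |(∫ x, h x * χm x ∂μ n) - ∫ x, h x * χm x ∂μ 0| < δ := by
    have := Metric.tendsto_nhds.1 (hweak (fun x => h x * χm x) (hh.mul χm.continuous)) δ hδ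
    filter_upwards [this] with n hn
    rwa [Real.dist_eq] at hn
  filter_upwards [Epsi, Emid] with n h1 h2
  rw [Real.dist_eq]
  have hψnn : (0:ℝ) ≤ ∫ x, ψ x ∂μ n := integral_nonneg hψ0
  have t1 := bound1 n
  have t2 := bound1 0
  have hMψn : M * ∫ x, ψ x ∂μ n ≤ M * (3 * δ) := by
    apply mul_le_mul_of_nonneg_left h1.le hM0
  have hMψ0 : M * ∫ x, ψ x ∂μ 0 ≤ M * (2 * δ) := by
    apply mul_le_mul_of_nonneg_left bound2 hM0
  have habs : |(∫ x in C, h x ∂μ n) - ∫ x in C, h x ∂μ 0|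
      ≤ |(∫ x in C, h x ∂μ n) - ∫ x, h x * χm x ∂μ n|
        + |(∫ x, h x * χm x ∂μ n) - ∫ x, h x * χm x ∂μ 0|
        + |(∫ x, h x * χm x ∂μ 0) - ∫ x in C, h x ∂μ 0| := by
    have := abs_sub_le (∫ x in C, h x ∂μ n) (∫ x, h x * χm x ∂μ n) (∫ x in C, h x ∂μ 0)
    have h' := abs_sub_le (∫ x, h x * χm x ∂μ n) (∫ x, h x * χm x ∂μ 0) (∫ x in C, h x ∂μ 0)
    linarith
  have hlast : |(∫ x, h x * χm x ∂μ 0) - ∫ x in C, h x ∂μ 0| ≤ M * (2 * δ) := by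
    rw [abs_sub_comm]; exact t2.trans hMψ0
  have hδε : (5 * M + 1) * δ < ε := by
    have : (6 * M + 6) * δ = ε := by
      rw [hδdef]; field_simp
    nlinarith
  calc |(∫ x in C, h x ∂μ n) - ∫ x in C, h x ∂μ 0|
      ≤ M * (3 * δ) + δ + M * (2 * δ) := by
        have := t1.trans hMψn
        linarith [habs, h2]
    _ = (5 * M + 1) * δ := by ring
    _ < ε := hδε

/-- The structural identity: the integral of `g` against the projected measure is the
double sum of set integrals, provided the time-weighted total mass is finite and `g`
agrees on `I` with a globally bounded continuous `g'`. -/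
lemma proj_integral_eq {f : ℝ → ℝ} (hf : Continuous f) (hfI : Set.MapsTo f unitI unitI)
    {Cd : ℕ → Set ℝ} (hCm : ∀ i, MeasurableSet (Cd i)) (hCsub : ∀ i, Cd i ⊆ unitI)
    (τ : ℕ → ℕ) {μ : Measure ℝ} [IsProbabilityMeasure μ]
    (hfin : (∑' i, (τ i : ℝ≥0∞) * μ (Cd i)) ≠ ∞)
    {g g' : ℝ → ℝ} (hg' : Continuous g') (hgg' : Set.EqOn g g' unitI)
    {M : ℝ} (hM : ∀ x, |g' x| ≤ M) :
    ∫ x, g x ∂projMeasure f Cd τ μ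
      = ∑' i, ∑ k ∈ Finset.range (τ i), ∫ x in Cd i, g' (f^[k] x) ∂μ := by
  have hIm : MeasurableSet unitI := measurableSet_Icc
  have hmi : ∀ k : ℕ, Measurable f^[k] := fun k => (hf.iterate k).measurable
  have hν : ∀ (i : ℕ) (k : ℕ),
      (Measure.map f^[k] (μ.restrict (Cd i))) Set.univ = μ (Cd i) := by
    intro i k
    rw [Measure.map_apply (hmi k) MeasurableSet.univ, Set.preimage_univ,
      Measure.restrict_apply_univ]
  have hmass : projMeasure f Cd τ μ Set.univ = ∑' i, (τ i : ℝ≥0∞) * μ (Cd i) := by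
    rw [projMeasure, Measure.sum_apply _ MeasurableSet.univ]
    refine tsum_congr fun i => ?_
    rw [Measure.sum_apply _ MeasurableSet.univ, tsum_fintype]
    simp [hν i, Finset.sum_const, Finset.card_univ, nsmul_eq_mul]
  have hnull : projMeasure f Cd τ μ unitIᶜ = 0 := by
    rw [projMeasure, Measure.sum_apply _ hIm.compl]
    rw [ENNReal.tsum_eq_zero]
    intro i
    rw [Measure.sum_apply _ hIm.compl, ENNReal.tsum_eq_zero]
    intro k
    rw [Measure.map_apply (hmi k) hIm.compl,
      Measure.restrict_apply ((hmi k) hIm.compl)]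
    refine measure_mono_null ?_ (measure_empty (μ := μ))
    intro x hx
    exact (hx.1 ((hfI.iterate k) (hCsub i hx.2))).elim
  have hae : g =ᵐ[projMeasure f Cd τ μ] g' := by
    rw [Filter.EventuallyEq, ae_iff]
    exact measure_mono_null (fun x hx hxI => hx (hgg' hxI)) hnull
  rw [integral_congr_ae hae]
  have hint : Integrable g' (projMeasure f Cd τ μ) :=
    integrable_of_bdd (by rw [hmass]; exact hfin) hg' hM
  rw [projMeasure] at hint ⊢
  rw [integral_sum_measure hint]
  refine tsum_congr fun i => ?_
  have hint_i : Integrable g'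
      (Measure.sum fun k : Fin (τ i) => Measure.map f^[(k : ℕ)] (μ.restrict (Cd i))) :=
    hint.mono_measure (Measure.le_sum _ i)
  rw [integral_sum_measure hint_i, tsum_fintype, ← Fin.sum_univ_eq_sum_range
    (fun k => ∫ x in Cd i, g' (f^[k] x) ∂μ) (τ i)]
  refine Finset.sum_congr rfl fun k _ => ?_
  rw [integral_map (hmi (k : ℕ)).aemeasurable hg'.aestronglyMeasurable]

/-- Convergence of the projections: with `f_n → f_0` uniformly on `I`,
pairwise disjoint subintervals `C_n^i` with inducing times `τ_n^i`, probability measures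
`μ_n` carried by `∪_i C_n^i` converging weak* to `μ_0`, uniform decay of the
time-weighted tails (i), matching of cylinders (ii), and boundary-nullity for the limit
(iii), the projected measures `μ*_n` converge to `μ*_0` against every continuous test
function. -/
theorem projections_converge
    (f : ℕ → ℝ → ℝ) (hfc : ∀ n, Continuous (f n)) (hfI : ∀ n, Set.MapsTo (f n) unitI unitI)
    (hfconv : TendstoUniformlyOn (fun n x => f n x) (f 0) atTop unitI)
    (Cd : ℕ → ℕ → Set ℝ) (τ : ℕ → ℕ → ℕ)
    (hCsub : ∀ n i, Cd n i ⊆ unitI ∧ (Cd n i).OrdConnected)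
    (hCdisj : ∀ n, Pairwise fun i j => Disjoint (Cd n i) (Cd n j))
    (hτ : ∀ n i, 1 ≤ τ n i)
    (μ : ℕ → Measure ℝ) [∀ n, IsProbabilityMeasure (μ n)]
    (hfull : ∀ n, μ n (⋃ i, Cd n i) = 1)
    (hweak : ∀ φ : ℝ → ℝ, Continuous φ →
      Tendsto (fun n => ∫ x, φ x ∂μ n) atTop (nhds (∫ x, φ x ∂μ 0)))
    (htail : ∀ ε > (0 : ℝ), ∃ N : ℕ,
      (∑' i : {i : ℕ // N < τ 0 i}, (τ 0 (i : ℕ) : ℝ≥0∞) * μ 0 (Cd 0 (i : ℕ)))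
          < ENNReal.ofReal ε ∧
        ∀ᶠ n in atTop,
          (∑' i : {i : ℕ // N < τ n i}, (τ n (i : ℕ) : ℝ≥0∞) * μ n (Cd n (i : ℕ)))
            < ENNReal.ofReal ε)
    (hmatch : ∀ i, (∀ᶠ n in atTop, τ n i = τ 0 i) ∧
      Tendsto (fun n => μ n (Cd n i ∆ Cd 0 i)) atTop (nhds 0))
    (hbd : ∀ i, μ 0 (frontier (Cd 0 i)) = 0) :
    ∀ g : ℝ → ℝ, Continuous g →
      Tendsto (fun n => ∫ x, g x ∂projMeasure (f n) (Cd n) (τ n) (μ n)) atTop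
        (nhds (∫ x, g x ∂projMeasure (f 0) (Cd 0) (τ 0) (μ 0))) := by
  intro g hg
  -- bounded modification of g
  set g' : ℝ → ℝ := fun x => g ((Set.projIcc (0 : ℝ) 1 zero_le_one x : ℝ)) with hg'def
  have hg'c : Continuous g' := hg.comp (continuous_subtype_val.comp continuous_projIcc)
  obtain ⟨M₀, hM₀⟩ := isCompact_Icc.exists_bound_of_continuousOn
    (hg.continuousOn (s := Set.Icc (0:ℝ) 1))
  set M : ℝ := max M₀ 1 with hMdef
  have hM1 : (1 : ℝ) ≤ M := le_max_right _ _
  have hM0 : (0 : ℝ) < M := lt_of_lt_of_le one_pos hM1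
  have hM : ∀ x, |g' x| ≤ M := by
    intro x
    have := hM₀ _ (Set.projIcc (0 : ℝ) 1 zero_le_one x).2
    rw [Real.norm_eq_abs] at this
    exact this.trans (le_max_left _ _)
  have hEq : Set.EqOn g g' unitI := by
    intro x hx
    simp only [hg'def]
    rw [Set.projIcc_of_mem zero_le_one hx]
  have hg'u : UniformContinuous g' := by
    have h1 : UniformContinuous fun y : Set.Icc (0:ℝ) 1 => g (y : ℝ) :=
      CompactSpace.uniformContinuous_of_continuous (hg.comp continuous_subtype_val)
    have h2 : UniformContinuous (Set.projIcc (0 : ℝ) 1 zero_le_one) :=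
      (LipschitzWith.projIcc zero_le_one).uniformContinuous
    exact h1.comp h2
  -- basic measurability
  have hCmeas : ∀ n i, MeasurableSet (Cd n i) := fun n i => (hCsub n i).2.measurableSet
  -- total masses
  have hsum1 : ∀ n, (∑' i, μ n (Cd n i)) = 1 := by
    intro n
    rw [← measure_iUnion (hCdisj n) (hCmeas n)]
    exact hfull n
  set m : ℕ → ℕ → ℝ := fun n i => (μ n (Cd n i)).toReal with hmdef
  have hm_sum : ∀ n, ∑' i, m n i = 1 := by
    intro n
    simp only [hmdef]
    rw [← ENNReal.tsum_toReal_eq (fun i => measure_ne_top _ _), hsum1 n, ENNReal.toReal_one]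
  have hm_summable : ∀ n, Summable (m n) := fun n =>
    ENNReal.summable_toReal (by rw [hsum1 n]; exact ENNReal.one_ne_top)
  have hm_nonneg : ∀ n i, 0 ≤ m n i := fun n i => ENNReal.toReal_nonneg
  -- the double-sum terms
  set a : ℕ → ℕ → ℝ := fun n i =>
    ∑ k ∈ Finset.range (τ n i), ∫ x in Cd n i, g' ((f n)^[k] x) ∂μ n with hadef
  -- finiteness of totals
  have htotal : ∀ n, (∑' i : {i : ℕ // τ n i ≤ 0 + 1 ∨ True}, (0:ℝ≥0∞)) = 0 := by
    intro n; simp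
  have htot_of_tail : ∀ (n N : ℕ) (c : ℝ≥0∞), c ≠ ∞ →
      (∑' i : {i : ℕ // N < τ n i}, (τ n (i : ℕ) : ℝ≥0∞) * μ n (Cd n (i : ℕ))) < c →
      (∑' i, (τ n i : ℝ≥0∞) * μ n (Cd n i)) ≠ ∞ := by
    intro n N c hc htl
    have hsplit := Summable.tsum_add_tsum_compl (s := {i : ℕ | N < τ n i})
      (f := fun i => (τ n i : ℝ≥0∞) * μ n (Cd n i)) ENNReal.summable ENNReal.summable
    rw [← hsplit]
    refine ENNReal.add_ne_top.2 ⟨(htl.trans_le le_top).ne_top, ?_⟩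
    have hb : (∑' i : ↑{i : ℕ | N < τ n i}ᶜ, (τ n (i : ℕ) : ℝ≥0∞) * μ n (Cd n (i : ℕ)))
        ≤ (N : ℝ≥0∞) * ∑' i, μ n (Cd n i) := by
      calc (∑' i : ↑{i : ℕ | N < τ n i}ᶜ, (τ n (i : ℕ) : ℝ≥0∞) * μ n (Cd n (i : ℕ)))
          ≤ ∑' i : ↑{i : ℕ | N < τ n i}ᶜ, (N : ℝ≥0∞) * μ n (Cd n (i : ℕ)) := by
            refine Summable.tsum_le_tsum (fun i => ?_) ENNReal.summable ENNReal.summable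
            have : τ n (i : ℕ) ≤ N := by
              have := i.2
              simp only [Set.mem_compl_iff, Set.mem_setOf_eq, not_lt] at this
              exact this
            exact mul_le_mul_left (by exact_mod_cast this) _
        _ = (N : ℝ≥0∞) * ∑' i : ↑{i : ℕ | N < τ n i}ᶜ, μ n (Cd n (i : ℕ)) :=
            ENNReal.tsum_mul_left
        _ ≤ (N : ℝ≥0∞) * ∑' i, μ n (Cd n i) := by
            refine mul_le_mul_right ?_ _
            exact ENNReal.tsum_comp_le_tsum_of_injective Subtype.val_injective _
    rw [hsum1 n, mul_one] at hb
    exact (hb.trans_lt (ENNReal.natCast_lt_top N)).ne_top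
  obtain ⟨N₁, hN₁0, hN₁ev⟩ := htail 1 one_pos
  have hGood0 : (∑' i, (τ 0 i : ℝ≥0∞) * μ 0 (Cd 0 i)) ≠ ∞ :=
    htot_of_tail 0 N₁ _ ENNReal.ofReal_ne_top hN₁0
  have hGoodev : ∀ᶠ n in atTop, (∑' i, (τ n i : ℝ≥0∞) * μ n (Cd n i)) ≠ ∞ :=
    hN₁ev.mono fun n h => htot_of_tail n N₁ _ ENNReal.ofReal_ne_top h
  -- summability facts
  have hsummable_τm : ∀ n, (∑' i, (τ n i : ℝ≥0∞) * μ n (Cd n i)) ≠ ∞ →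
      Summable (fun i => (τ n i : ℝ) * m n i) := by
    intro n h
    have := ENNReal.summable_toReal h
    refine this.congr fun i => ?_
    rw [ENNReal.toReal_mul, ENNReal.toReal_natCast]
  have habound : ∀ n i, |a n i| ≤ M * ((τ n i : ℝ) * m n i) := by
    intro n i
    have hterm : ∀ k, |∫ x in Cd n i, g' ((f n)^[k] x) ∂μ n| ≤ M * m n i := by
      intro k
      have := norm_setIntegral_le_of_norm_le_const (μ := μ n) (s := Cd n i)
        (f := fun x => g' ((f n)^[k] x)) (C := M) (measure_lt_top _ _)
        (fun x _ => by rw [Real.norm_eq_abs]; exact hM _)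
      rwa [Real.norm_eq_abs, measureReal_def] at this
    calc |a n i| ≤ ∑ k ∈ Finset.range (τ n i), |∫ x in Cd n i, g' ((f n)^[k] x) ∂μ n| := by
          rw [hadef]; exact Finset.abs_sum_le_sum_abs _ _
      _ ≤ (Finset.range (τ n i)).card • (M * m n i) :=
          Finset.sum_le_card_nsmul _ _ _ (fun k _ => hterm k)
      _ = M * ((τ n i : ℝ) * m n i) := by
          rw [Finset.card_range, nsmul_eq_mul]; ring
  have hsummable_a : ∀ n, (∑' i, (τ n i : ℝ≥0∞) * μ n (Cd n i)) ≠ ∞ → Summable (a n) := by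
    intro n h
    exact Summable.of_norm_bounded ((hsummable_τm n h).mul_left M)
      (fun i => by rw [Real.norm_eq_abs]; exact habound n i)
  -- symmetric difference control
  have hΔ : ∀ i, Tendsto (fun n => (μ n (Cd n i ∆ Cd 0 i)).toReal) atTop (nhds 0) := by
    intro i
    have := (ENNReal.tendsto_toReal ENNReal.zero_ne_top).comp (hmatch i).2
    simpa [Function.comp_def] using this
  have habs_m : ∀ (ν : Measure ℝ) [IsProbabilityMeasure ν] (A B : Set ℝ),
      |(ν A).toReal - (ν B).toReal| ≤ (ν (A ∆ B)).toReal := by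
    intro ν _ A B
    have hsub : ∀ (A B : Set ℝ), A ⊆ B ∪ (A ∆ B) := by
      intro A B x hx
      by_cases hB : x ∈ B
      · exact Or.inl hB
      · exact Or.inr (Set.mem_symmDiff.2 (Or.inl ⟨hx, hB⟩))
    have key : ∀ (A B : Set ℝ), (ν A).toReal ≤ (ν B).toReal + (ν (A ∆ B)).toReal := by
      intro A B
      have h1 : ν A ≤ ν B + ν (A ∆ B) :=
        (measure_mono (hsub A B)).trans (measure_union_le _ _)
      calc (ν A).toReal ≤ (ν B + ν (A ∆ B)).toReal := ENNReal.toReal_mono (by finiteness) h1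
        _ = (ν B).toReal + (ν (A ∆ B)).toReal :=
            ENNReal.toReal_add (measure_ne_top _ _) (measure_ne_top _ _)
    rw [abs_sub_le_iff]
    constructor
    · linarith [key A B]
    · have := key B A
      rw [symmDiff_comm] at this
      linarith
  -- convergence of the masses
  have hm_tendsto : ∀ i, Tendsto (fun n => m n i) atTop (nhds (m 0 i)) := by
    intro i
    have h1 : Tendsto (fun n => (μ n (Cd 0 i)).toReal) atTop (nhds (m 0 i)) := by
      have := setIntegral_weak_tendsto μ hweak (hCmeas 0 i) (hbd i)
        (continuous_const (y := (1:ℝ))) (M := 1) (fun x => by norm_num)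
      simpa [setIntegral_const, smul_eq_mul, hmdef, measureReal_def] using this
    have h2 : Tendsto (fun n => m n i - (μ n (Cd 0 i)).toReal) atTop (nhds 0) := by
      refine squeeze_zero_norm (fun n => ?_) (hΔ i)
      rw [Real.norm_eq_abs]
      exact habs_m (μ n) (Cd n i) (Cd 0 i)
    have := h2.add h1
    rw [zero_add] at this
    refine this.congr fun n => by ring
  -- convergence of each term of the double sum
  have hbk : ∀ i k, Tendsto (fun n => ∫ x in Cd n i, g' ((f n)^[k] x) ∂μ n) atTop
      (nhds (∫ x in Cd 0 i, g' ((f 0)^[k] x) ∂μ 0)) := by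
    intro i k
    set h : ℝ → ℝ := fun x => g' ((f 0)^[k] x) with hhdef
    have hhc : Continuous h := hg'c.comp ((hfc 0).iterate k)
    have hhM : ∀ x, |h x| ≤ M := fun x => hM _
    have hd : Tendsto (fun n => ∫ x in Cd 0 i, h x ∂μ n) atTop
        (nhds (∫ x in Cd 0 i, h x ∂μ 0)) :=
      setIntegral_weak_tendsto μ hweak (hCmeas 0 i) (hbd i) hhc hhM
    have hcd : Tendsto
        (fun n => (∫ x in Cd n i, h x ∂μ n) - ∫ x in Cd 0 i, h x ∂μ n) atTop (nhds 0) := by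
      have hb : ∀ n, ‖(∫ x in Cd n i, h x ∂μ n) - ∫ x in Cd 0 i, h x ∂μ n‖
          ≤ M * (μ n (Cd n i ∆ Cd 0 i)).toReal := by
        intro n
        have hintA : Integrable ((Cd n i).indicator h) (μ n) :=
          (integrable_of_bdd (measure_ne_top _ _) hhc hhM).indicator (hCmeas n i)
        have hintB : Integrable ((Cd 0 i).indicator h) (μ n) :=
          (integrable_of_bdd (measure_ne_top _ _) hhc hhM).indicator (hCmeas 0 i)
        have hΔmeas : MeasurableSet (Cd n i ∆ Cd 0 i) :=
          (hCmeas n i).symmDiff (hCmeas 0 i)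
        rw [← integral_indicator (hCmeas n i), ← integral_indicator (hCmeas 0 i),
          ← integral_sub hintA hintB]
        have hptw : ∀ x, ‖(Cd n i).indicator h x - (Cd 0 i).indicator h x‖
            ≤ (Cd n i ∆ Cd 0 i).indicator (fun _ => M) x := by
          intro x
          by_cases hA : x ∈ Cd n i <;> by_cases hB : x ∈ Cd 0 i
          · have hΔ' : x ∉ Cd n i ∆ Cd 0 i := by
              rw [Set.mem_symmDiff]; push_neg
              exact ⟨fun _ => hB, fun _ => hA⟩
            simp [Set.indicator_of_mem, hA, hB, Set.indicator_of_notMem, hΔ']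
          · have hΔ' : x ∈ Cd n i ∆ Cd 0 i := Set.mem_symmDiff.2 (Or.inl ⟨hA, hB⟩)
            simp only [Set.indicator_of_mem, hA, hB, Set.indicator_of_notMem,
              not_false_iff, sub_zero, Set.indicator_of_mem hΔ']
            rw [Real.norm_eq_abs]; exact hhM x
          · have hΔ' : x ∈ Cd n i ∆ Cd 0 i := Set.mem_symmDiff.2 (Or.inr ⟨hB, hA⟩)
            simp only [Set.indicator_of_mem, hB, Set.indicator_of_notMem hA, zero_sub,
              Set.indicator_of_mem hΔ']
            rw [norm_neg, Real.norm_eq_abs]; exact hhM x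
          · have hΔ' : x ∉ Cd n i ∆ Cd 0 i := by
              rw [Set.mem_symmDiff]; push_neg
              exact ⟨fun h' => (hA h').elim, fun h' => (hB h').elim⟩
            simp [Set.indicator_of_notMem, hA, hB, hΔ']
        have hintΔ : Integrable ((Cd n i ∆ Cd 0 i).indicator (fun _ => M)) (μ n) :=
          (integrable_const M).indicator hΔmeas
        have := norm_integral_le_of_norm_le hintΔ (Eventually.of_forall hptw)
        rw [integral_indicator_const M hΔmeas, smul_eq_mul, mul_comm] at this
        exact this
      have hlim : Tendsto (fun n => M * (μ n (Cd n i ∆ Cd 0 i)).toReal) atTop (nhds 0) := by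
        have := (hΔ i).const_mul M
        simpa using this
      exact squeeze_zero_norm hb hlim
    have hbc : Tendsto
        (fun n => (∫ x in Cd n i, g' ((f n)^[k] x) ∂μ n) - ∫ x in Cd n i, h x ∂μ n)
        atTop (nhds 0) := by
      rw [NormedAddCommGroup.tendsto_nhds_zero]
      intro ε hε
      have huk : TendstoUniformlyOn (fun n x => g' ((f n)^[k] x))
          (fun x => g' ((f 0)^[k] x)) atTop unitI := by
        have h1 := iter_tendstoUniformlyOn hfI (hfc 0) hfconv k
        have := hg'u.comp_tendstoUniformlyOn h1
        simpa [Function.comp_def] using this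
      have hev := (Metric.tendstoUniformlyOn_iff.1 huk) (ε / 2) (half_pos hε)
      filter_upwards [hev] with n hn
      have hint1 : IntegrableOn (fun x => g' ((f n)^[k] x)) (Cd n i) (μ n) :=
        (integrable_of_bdd (measure_ne_top _ _) (hg'c.comp ((hfc n).iterate k))
          (fun x => hM _)).integrableOn
      have hint2 : IntegrableOn h (Cd n i) (μ n) :=
        (integrable_of_bdd (measure_ne_top _ _) hhc hhM).integrableOn
      rw [← integral_sub hint1 hint2]
      have hbound := norm_setIntegral_le_of_norm_le_const (μ := μ n) (s := Cd n i)
        (f := fun x => g' ((f n)^[k] x) - h x) (C := ε / 2) (measure_lt_top _ _)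
        (fun x hx => by
          have := hn x ((hCsub n i).1 hx)
          rw [dist_comm, Real.dist_eq] at this
          rw [Real.norm_eq_abs]
          exact this.le)
      have hμ1 : (μ n (Cd n i)).toReal ≤ 1 := by
        have h1 : μ n (Cd n i) ≤ 1 := prob_le_one
        have := ENNReal.toReal_mono ENNReal.one_ne_top h1
        simpa using this
      calc ‖∫ x in Cd n i, (g' ((f n)^[k] x) - h x) ∂μ n‖
          ≤ ε / 2 * (μ n (Cd n i)).toReal := hbound
        _ ≤ ε / 2 * 1 := by
            apply mul_le_mul_of_nonneg_left hμ1 (half_pos hε).le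
        _ < ε := by linarith
    have hcomb := (hbc.add hcd).add hd
    rw [zero_add, zero_add] at hcomb
    refine hcomb.congr fun n => by ring
  -- convergence of each `a · i`
  have ha : ∀ i, Tendsto (fun n => a n i) atTop (nhds (a 0 i)) := by
    intro i
    have hts : Tendsto (fun n => ∑ k ∈ Finset.range (τ 0 i),
        ∫ x in Cd n i, g' ((f n)^[k] x) ∂μ n) atTop (nhds (a 0 i)) := by
      rw [hadef]
      exact tendsto_finset_sum _ (fun k _ => hbk i k)
    refine Tendsto.congr' ?_ hts
    filter_upwards [(hmatch i).1] with n hn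
    rw [hadef]
    simp only [hn]
  -- the structural identity, eventually and at 0
  have hInt0 : ∫ x, g x ∂projMeasure (f 0) (Cd 0) (τ 0) (μ 0) = ∑' i, a 0 i :=
    proj_integral_eq (hfc 0) (hfI 0) (hCmeas 0) (fun i => (hCsub 0 i).1) (τ 0)
      hGood0 hg'c hEq hM
  have hIntEv : ∀ᶠ n in atTop,
      ∫ x, g x ∂projMeasure (f n) (Cd n) (τ n) (μ n) = ∑' i, a n i :=
    hGoodev.mono fun n h =>
      proj_integral_eq (hfc n) (hfI n) (hCmeas n) (fun i => (hCsub n i).1) (τ n)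
        h hg'c hEq hM
  -- the main limit of the sums
  have key : Tendsto (fun n => ∑' i, a n i) atTop (nhds (∑' i, a 0 i)) := by
    rw [Metric.tendsto_nhds]
    intro ε hε
    set ε' : ℝ := ε / (8 * M) with hε'def
    have hε' : 0 < ε' := div_pos hε (by linarith)
    obtain ⟨N, hN0, hNev⟩ := htail ε' hε'
    set δ : ℝ := ε / (8 * (M * N + 1)) with hδdef
    have hMN0 : (0:ℝ) ≤ M * N := by positivity
    have hδ : 0 < δ := div_pos hε (by linarith)
    -- choose the finite set S
    have hhs : HasSum (m 0) 1 := by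
      have := (hm_summable 0).hasSum
      rwa [hm_sum 0] at this
    obtain ⟨S, hS⟩ := (hhs.eventually (eventually_gt_nhds
      (show 1 - δ / 2 < 1 by linarith))).exists
    -- the tail bound, for any n with the required properties
    have hbound_tail : ∀ n,
        (∑' i : {i : ℕ // N < τ n i}, (τ n (i : ℕ) : ℝ≥0∞) * μ n (Cd n (i : ℕ)))
            < ENNReal.ofReal ε' →
        (∑' i, (τ n i : ℝ≥0∞) * μ n (Cd n i)) ≠ ∞ →
        1 - δ < ∑ i ∈ S, m n i →
        |(∑' i, a n i) - ∑ i ∈ S, a n i| ≤ ε / 4 := by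
      intro n htl htot' hSm
      have hsum_a := hsummable_a n htot'
      have hsum_τm := hsummable_τm n htot'
      rw [← Summable.sum_add_tsum_subtype_compl hsum_a S, add_sub_cancel_left]
      -- bound the compl sum
      set e : ℕ → ℝ := fun i => if N < τ n i then M * ((τ n i : ℝ) * m n i) else 0
        with hedef
      have he_nonneg : ∀ i, 0 ≤ e i := by
        intro i
        simp only [hedef]
        split
        · positivity
        · exact le_rfl
      have he_le : ∀ i, e i ≤ M * ((τ n i : ℝ) * m n i) := by
        intro i
        simp only [hedef]
        split
        · exact le_rfl
        · positivity
      have hsum_e : Summable e :=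
        Summable.of_nonneg_of_le he_nonneg he_le (hsum_τm.mul_left M)
      have hptw : ∀ i, ‖a n i‖ ≤ M * N * m n i + e i := by
        intro i
        rw [Real.norm_eq_abs]
        by_cases hi : N < τ n i
        · have : e i = M * ((τ n i : ℝ) * m n i) := by simp only [hedef]; rw [if_pos hi]
          rw [this]
          have : (0:ℝ) ≤ M * N * m n i := by positivity
          linarith [habound n i]
        · push_neg at hi
          have h1 : (τ n i : ℝ) ≤ N := by exact_mod_cast hi
          have h2 : M * ((τ n i : ℝ) * m n i) ≤ M * N * m n i := by
            have h3 : (τ n i : ℝ) * m n i ≤ (N : ℝ) * m n i :=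
              mul_le_mul_of_nonneg_right h1 (hm_nonneg n i)
            calc M * ((τ n i : ℝ) * m n i) ≤ M * ((N : ℝ) * m n i) :=
                  mul_le_mul_of_nonneg_left h3 hM0.le
              _ = M * N * m n i := by ring
          have : e i = 0 := by simp only [hedef]; rw [if_neg (not_lt.2 hi)]
          rw [this]
          linarith [habound n i]
      have hsum_bound : Summable (fun i => M * N * m n i + e i) :=
        (((hm_summable n).mul_left (M * N))).add hsum_e
      have hnorm1 : ‖∑' i : {x // x ∉ S}, a n (i : ℕ)‖
          ≤ ∑' i : {x // x ∉ S}, (M * N * m n (i : ℕ) + e (i : ℕ)) := by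
        refine (norm_tsum_le_tsum_norm ((hsum_a.norm).subtype _)).trans ?_
        exact Summable.tsum_le_tsum (fun i => hptw (i : ℕ)) ((hsum_a.norm).subtype _)
          (hsum_bound.subtype _)
      have hsplit2 : (∑' i : {x // x ∉ S}, (M * N * m n (i : ℕ) + e (i : ℕ)))
          = (∑' i : {x // x ∉ S}, M * N * m n (i : ℕ))
            + ∑' i : {x // x ∉ S}, e (i : ℕ) :=
        Summable.tsum_add (((hm_summable n).mul_left (M * N)).subtype _) (hsum_e.subtype _)
      -- first piece
      have hfirst : (∑' i : {x // x ∉ S}, M * N * m n (i : ℕ)) ≤ M * N * δ := by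
        have heq : (∑' i : {x // x ∉ S}, M * N * m n (i : ℕ))
            = M * N * ∑' i : {x // x ∉ S}, m n (i : ℕ) := tsum_mul_left
        have hcompl : ∑' i : {x // x ∉ S}, m n (i : ℕ) = 1 - ∑ i ∈ S, m n i := by
          have := Summable.sum_add_tsum_subtype_compl (hm_summable n) S
          rw [hm_sum n] at this
          linarith
        rw [heq, hcompl]
        have hle : 1 - ∑ i ∈ S, m n i ≤ δ := by linarith
        exact mul_le_mul_of_nonneg_left hle hMN0
      -- second piece
      have hsecond : (∑' i : {x // x ∉ S}, e (i : ℕ)) ≤ M * ε' := by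
        have h1 : (∑' i : {x // x ∉ S}, e (i : ℕ)) ≤ ∑' i, e i := by
          have heq : (∑' i : {x // x ∉ S}, e (i : ℕ))
              = ∑' i, ({x : ℕ | x ∉ S}.indicator e) i := tsum_subtype {x : ℕ | x ∉ S} e
          rw [heq]
          exact Summable.tsum_le_tsum (fun i => Set.indicator_le_self' (fun x _ => he_nonneg x) i)
            (hsum_e.indicator _) hsum_e
        have h2 : (∑' i, e i) = M * ∑' i : {i : ℕ // N < τ n i}, (τ n (i:ℕ) : ℝ) * m n (i:ℕ) := by
          have hsupp : Function.support e ⊆ {i : ℕ | N < τ n i} := by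
            intro i hi
            rw [Function.mem_support] at hi
            by_contra h'
            simp only [Set.mem_setOf_eq] at h'
            apply hi
            simp only [hedef]; rw [if_neg h']
          have := tsum_subtype_eq_of_support_subset hsupp
          rw [← this]
          have hcongr : (∑' i : {i : ℕ | N < τ n i}, e (i : ℕ))
              = ∑' i : {i : ℕ | N < τ n i}, M * ((τ n (i:ℕ) : ℝ) * m n (i:ℕ)) := by
            refine tsum_congr fun i => ?_
            simp only [hedef]
            split_ifs with h'
            · rfl
            · exact absurd i.2 h'
          rw [hcongr, tsum_mul_left]
          rfl
        have h3 : (∑' i : {i : ℕ // N < τ n i}, (τ n (i:ℕ) : ℝ) * m n (i:ℕ)) < ε' := by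
          have heq : (∑' i : {i : ℕ // N < τ n i}, (τ n (i:ℕ) : ℝ) * m n (i:ℕ))
              = (∑' i : {i : ℕ // N < τ n i},
                  (τ n (i : ℕ) : ℝ≥0∞) * μ n (Cd n (i : ℕ))).toReal := by
            rw [ENNReal.tsum_toReal_eq
              (fun i => ENNReal.mul_ne_top (ENNReal.natCast_ne_top _) (measure_ne_top _ _))]
            refine tsum_congr fun i => ?_
            rw [ENNReal.toReal_mul, ENNReal.toReal_natCast]
          rw [heq]
          exact ENNReal.toReal_lt_of_lt_ofReal htl
        calc (∑' i : {x // x ∉ S}, e (i : ℕ)) ≤ ∑' i, e i := h1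
          _ = M * ∑' i : {i : ℕ // N < τ n i}, (τ n (i:ℕ) : ℝ) * m n (i:ℕ) := h2
          _ ≤ M * ε' := mul_le_mul_of_nonneg_left h3.le hM0.le
      -- combine
      have hMNδ : M * N * δ ≤ ε / 8 := by
        have hpos : (0:ℝ) < 8 * (M * N + 1) := by linarith
        calc M * N * δ = M * N * ε / (8 * (M * N + 1)) := by rw [hδdef]; ring
          _ ≤ ε / 8 := by
              rw [div_le_div_iff₀ hpos (by norm_num : (0:ℝ) < 8)]
              nlinarith [hε.le, hMN0]
      have hMε' : M * ε' = ε / 8 := by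
        rw [hε'def]
        field_simp
      calc |∑' i : {x // x ∉ S}, a n (i : ℕ)|
          ≤ (∑' i : {x // x ∉ S}, M * N * m n (i : ℕ))
            + ∑' i : {x // x ∉ S}, e (i : ℕ) := by
            rw [← hsplit2, ← Real.norm_eq_abs]; exact hnorm1
        _ ≤ M * N * δ + M * ε' := add_le_add hfirst hsecond
        _ ≤ ε / 8 + ε / 8 := by rw [hMε']; linarith
        _ = ε / 4 := by ring
    -- eventual statements
    set ε4 : ℝ := ε / (4 * (S.card + 1)) with hε4def
    have hε4 : 0 < ε4 := div_pos hε (by positivity)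
    have hE1 : ∀ᶠ n in atTop, ∀ i ∈ S, |a n i - a 0 i| < ε4 := by
      rw [Filter.eventually_all_finset]
      intro i _
      have := Metric.tendsto_nhds.1 (ha i) ε4 hε4
      filter_upwards [this] with n hn
      rwa [Real.dist_eq] at hn
    have hE2 : ∀ᶠ n in atTop, 1 - δ < ∑ i ∈ S, m n i := by
      have hts : Tendsto (fun n => ∑ i ∈ S, m n i) atTop (nhds (∑ i ∈ S, m 0 i)) :=
        tendsto_finset_sum _ (fun i _ => hm_tendsto i)
      exact hts.eventually (eventually_gt_nhds (by linarith))
    have h0Sm : 1 - δ < ∑ i ∈ S, m 0 i := by linarith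
    have h0bound := hbound_tail 0 hN0 hGood0 h0Sm
    filter_upwards [hE1, hE2, hNev, hGoodev] with n h1 h2 h3 h4
    have hnb := hbound_tail n h3 h4 h2
    rw [Real.dist_eq]
    have hsumdiff : |(∑ i ∈ S, a n i) - ∑ i ∈ S, a 0 i| ≤ ε / 4 := by
      have h5 : |(∑ i ∈ S, a n i) - ∑ i ∈ S, a 0 i| ≤ ∑ i ∈ S, |a n i - a 0 i| := by
        rw [← Finset.sum_sub_distrib]
        exact Finset.abs_sum_le_sum_abs _ _
      have h6 : ∑ i ∈ S, |a n i - a 0 i| ≤ S.card • ε4 :=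
        Finset.sum_le_card_nsmul _ _ _ (fun i hi => (h1 i hi).le)
      have h7 : (S.card : ℝ) * ε4 ≤ ε / 4 := by
        have hpos : (0:ℝ) < 4 * ((S.card : ℝ) + 1) := by positivity
        calc (S.card : ℝ) * ε4 = (S.card : ℝ) * ε / (4 * ((S.card : ℝ) + 1)) := by
              rw [hε4def]; ring
          _ ≤ ε / 4 := by
              rw [div_le_div_iff₀ hpos (by norm_num : (0:ℝ) < 4)]
              nlinarith [hε.le, Nat.cast_nonneg (α := ℝ) S.card]
      rw [nsmul_eq_mul] at h6
      linarith
    have hfin : |(∑' i, a n i) - ∑' i, a 0 i| ≤ ε / 4 + ε / 4 + ε / 4 := by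
      have t1 := abs_sub_le (∑' i, a n i) (∑ i ∈ S, a n i) (∑' i, a 0 i)
      have t2 := abs_sub_le (∑ i ∈ S, a n i) (∑ i ∈ S, a 0 i) (∑' i, a 0 i)
      have t3 : |(∑ i ∈ S, a 0 i) - ∑' i, a 0 i| ≤ ε / 4 := by
        rw [abs_sub_comm]; exact h0bound
      linarith
    linarith
  -- conclude
  rw [hInt0]
  exact Tendsto.congr' (hIntEv.mono fun n h => h.symm) key

end
end
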